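/- arXiv:0812.1080 — 7 statements merged into one kernel-verified Lean document; each statement's English description precedes it below -/
import Mathlib

section
/- The Hilbert distance on the interior of a compact convex body is bounded below by a positive multiple of the Euclidean distance: for all x, y in int K, d(x,y) ≥ (log 2 / D) · ‖x − y‖₂, where D is the Euclidean diameter of K. -/
/-!
On the chord through `x ≠ y`, with boundary points `a₁, x, y, a₂` in this order, the Hilbert
distance is `½ log ((A + r) / A · (B + r) / B)` where `A = ‖x - a₁‖`, `B = ‖y - a₂‖` and
`r = ‖x - y‖`, all at most `D`. Each factor is at least `1 + r / D`, and concavity of `log` gives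
`log (1 + s) ≥ s log 2` for `s ∈ [0, 1]`.
-/

open Set Filter Topology

lemma mul_log_two_le_log_one_add {s : ℝ} (h0 : 0 ≤ s) (h1 : s ≤ 1) :
    s * Real.log 2 ≤ Real.log (1 + s) := by
  have hconcave := strictConcaveOn_log_Ioi.concaveOn.2 (mem_Ioi.2 one_pos) (mem_Ioi.2 two_pos)
    (sub_nonneg.2 h1) h0 (sub_add_cancel 1 s)
  simp only [smul_eq_mul, Real.log_one, mul_zero, zero_add, mul_one] at hconcave
  rwa [show 1 - s + s * 2 = 1 + s by ring] at hconcave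

lemma log_two_div_mul_le_log_add_div {A r D : ℝ} (hA : 0 < A) (hr : 0 ≤ r) (hAD : A ≤ D)
    (hrD : r ≤ D) : Real.log 2 / D * r ≤ Real.log ((A + r) / A) := by
  have hD : 0 < D := hA.trans_le hAD
  calc Real.log 2 / D * r = r / D * Real.log 2 := by ring
    _ ≤ Real.log (1 + r / D) :=
      mul_log_two_le_log_one_add (by positivity) ((div_le_one hD).2 hrD)
    _ ≤ Real.log (1 + r / A) := by gcongr
    _ = Real.log ((A + r) / A) := by rw [add_div, div_self hA.ne']

lemma log_two_div_mul_le_half_log_cross_ratio {A B r D : ℝ} (hA : 0 < A) (hB : 0 < B)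
    (hr : 0 ≤ r) (hAD : A ≤ D) (hBD : B ≤ D) (hrD : r ≤ D) :
    Real.log 2 / D * r ≤ 1 / 2 * Real.log ((A + r) / A * ((B + r) / B)) := by
  rw [Real.log_mul (by positivity) (by positivity)]
  linarith [log_two_div_mul_le_log_add_div hA hr hAD hrD,
    log_two_div_mul_le_log_add_div hB hr hBD hrD]

section

variable {E : Type*} [NormedAddCommGroup E] [NormedSpace ℝ E]

lemma exists_pos_add_smul_mem_frontier {K : Set E} (hK : Bornology.IsBounded K) {x v : E}
    (hx : x ∈ interior K) (hv : v ≠ 0) : ∃ t : ℝ, 0 < t ∧ x + t • v ∈ frontier K := by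
  set f : ℝ → E := fun t ↦ x + t • v
  have hf : Continuous f := by fun_prop
  have hnear : ∃ t > 0, f t ∈ interior K := by
    have hx' : interior K ∈ 𝓝 (f 0) := by simpa [f] using isOpen_interior.mem_nhds hx
    have : ∀ᶠ t in 𝓝[>] (0 : ℝ), f t ∈ interior K :=
      nhdsWithin_le_nhds (hf.continuousAt.preimage_mem_nhds hx')
    exact (eventually_mem_nhdsWithin.and this).exists
  have hfar : ∃ t > 0, f t ∉ closure K := by
    obtain ⟨R, hR, hKR⟩ := hK.closure.subset_ball_lt 0 x
    have hvpos : 0 < ‖v‖ := norm_pos_iff.2 hv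
    refine ⟨R / ‖v‖, by positivity, fun h ↦ ?_⟩
    have := hKR h
    rw [Metric.mem_ball, dist_eq_norm, add_sub_cancel_left, norm_smul, Real.norm_eq_abs,
      abs_of_pos (by positivity), div_mul_cancel₀ R hvpos.ne'] at this
    exact lt_irrefl R this
  by_contra! hnot
  have hcover : Ioi 0 ⊆ f ⁻¹' interior K ∪ f ⁻¹' (closure K)ᶜ := fun t ht ↦ by
    by_cases hint : f t ∈ interior K
    · exact Or.inl hint
    · exact Or.inr fun hcl ↦ hnot t ht ⟨hcl, hint⟩
  obtain ⟨t, -, hint, hext⟩ := isPreconnected_Ioi _ _ (isOpen_interior.preimage hf)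
    (isClosed_closure.isOpen_compl.preimage hf) hcover hnear hfar
  exact hext (interior_subset_closure hint)

lemma norm_sub_add_smul_sub {x y : E} {s : ℝ} (hs : 0 ≤ s) :
    ‖y - (x + s • (x - y))‖ = ‖x - (x + s • (x - y))‖ + ‖x - y‖ := by
  rw [show y - (x + s • (x - y)) = -((1 + s) • (x - y)) by module,
    show x - (x + s • (x - y)) = -(s • (x - y)) by module]
  simp only [norm_neg, norm_smul, Real.norm_eq_abs, abs_of_nonneg hs,
    abs_of_nonneg (by linarith : (0 : ℝ) ≤ 1 + s)]
  ring

end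

theorem hilbert_dist_ge_euclidean_general {n : ℕ} (K : Set (EuclideanSpace ℝ (Fin n)))
    (hKcomp : IsCompact K)
    (d : EuclideanSpace ℝ (Fin n) → EuclideanSpace ℝ (Fin n) → ℝ)
    (hd0 : ∀ x, d x x = 0)
    (hd : ∀ x y, x ∈ interior K → y ∈ interior K → x ≠ y →
      ∀ a1 a2 : EuclideanSpace ℝ (Fin n), a1 ∈ frontier K → a2 ∈ frontier K →
      (∃ t1 t2 : ℝ, t1 < 0 ∧ 1 < t2 ∧ a1 = x + t1 • (y - x) ∧ a2 = x + t2 • (y - x)) →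
      d x y = (1/2) * Real.log ((‖y - a1‖ / ‖x - a1‖) * (‖x - a2‖ / ‖y - a2‖))) :
    ∀ x ∈ interior K, ∀ y ∈ interior K,
      d x y ≥ (Real.log 2 / Metric.diam K) * ‖x - y‖ := by
  intro x hx y hy
  rcases eq_or_ne x y with rfl | hxy
  · simp [hd0]
  obtain ⟨s₁, hs₁, ha₁⟩ :=
    exists_pos_add_smul_mem_frontier hKcomp.isBounded hx (sub_ne_zero.2 hxy)
  obtain ⟨s₂, hs₂, ha₂⟩ :=
    exists_pos_add_smul_mem_frontier hKcomp.isBounded hy (sub_ne_zero.2 hxy.symm)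
  have hline : ∃ t1 t2 : ℝ, t1 < 0 ∧ 1 < t2 ∧ x + s₁ • (x - y) = x + t1 • (y - x) ∧
      y + s₂ • (y - x) = x + t2 • (y - x) :=
    ⟨-s₁, 1 + s₂, by linarith, by linarith, by module, by module⟩
  have hdiam {p q} (hp : p ∈ K) (hq : q ∈ K) : ‖p - q‖ ≤ Metric.diam K := by
    rw [← dist_eq_norm]
    exact Metric.dist_le_diam_of_mem hKcomp.isBounded hp hq
  have hdist {p q} (hp : p ∈ interior K) (hq : q ∈ frontier K) : 0 < ‖p - q‖ :=
    norm_pos_iff.2 (sub_ne_zero.2 (disjoint_interior_frontier.ne_of_mem hp hq))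
  rw [ge_iff_le, hd x y hx hy hxy _ _ ha₁ ha₂ hline, norm_sub_add_smul_sub hs₁.le,
    norm_sub_add_smul_sub hs₂.le, norm_sub_rev y x]
  exact log_two_div_mul_le_half_log_cross_ratio (hdist hx ha₁) (hdist hy ha₂) (norm_nonneg _)
    (hdiam (interior_subset hx) (hKcomp.isClosed.frontier_subset ha₁))
    (hdiam (interior_subset hy) (hKcomp.isClosed.frontier_subset ha₂))
    (hdiam (interior_subset hx) (interior_subset hy))

/-- The Hilbert distance is bounded below by `(log 2 / D)` times the Euclidean distance,
where `D` is the Euclidean diameter of the body. -/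
theorem hilbert_dist_ge_euclidean {n : ℕ} (K : Set (EuclideanSpace ℝ (Fin n)))
    (hKcomp : IsCompact K) (hKconv : Convex ℝ K) (hKint : (interior K).Nonempty)
    (d : EuclideanSpace ℝ (Fin n) → EuclideanSpace ℝ (Fin n) → ℝ)
    (hd0 : ∀ x, d x x = 0)
    (hd : ∀ x y, x ∈ interior K → y ∈ interior K → x ≠ y →
      ∀ a1 a2 : EuclideanSpace ℝ (Fin n), a1 ∈ frontier K → a2 ∈ frontier K →
      (∃ t1 t2 : ℝ, t1 < 0 ∧ 1 < t2 ∧ a1 = x + t1 • (y - x) ∧ a2 = x + t2 • (y - x)) →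
      d x y = (1/2) * Real.log ((‖y - a1‖ / ‖x - a1‖) * (‖x - a2‖ / ‖y - a2‖))) :
    ∀ x ∈ interior K, ∀ y ∈ interior K,
      d x y ≥ (Real.log 2 / Metric.diam K) * ‖x - y‖ :=
  hilbert_dist_ge_euclidean_general K hKcomp d hd0 hd
end

section
/- The map Φ : int P → ℝⁿ defined by Φ(x) = Σ_{i=1}^m log(f_i(x)) · ∇f_i is Lipschitz continuous from (int P, d) with the Hilbert metric to ℝⁿ with the Euclidean metric; explicitly, ‖Φ(x) − Φ(y)‖₂ ≤ 2mR · d(x,y) for all x, y ∈ int P, where R = max_i ‖∇f_i‖₂. -/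
/-!
Fix `x ≠ y` in `int P` and let the chord through them leave `P` at `a₁ = x + t • (y - x)` and
`a₂ = y + s • (x - y)` with `t, s < 0`. Each `fᵢ` is affine along the chord and nonnegative at
`a₁, a₂`, which gives `fᵢ(y) / fᵢ(x) ≤ (1 - t) / -t` and `fᵢ(x) / fᵢ(y) ≤ (1 - s) / -s`.
The product of these two factors is the cross ratio defining `d(x, y)`, so
`|log fᵢ(x) - log fᵢ(y)| ≤ 2 d(x, y)`, and summing against `‖∇fᵢ‖ ≤ R` gives the bound.
-/

open RealInnerProductSpace Real Set Filter Topology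

theorem IsPreconnected.inter_frontier_nonempty {X : Type*} [TopologicalSpace X] {s t : Set X}
    (hs : IsPreconnected s) (hst : (s ∩ t).Nonempty) (hst' : (s \ t).Nonempty) :
    (s ∩ frontier t).Nonempty := by
  by_contra h
  have hcover : s ⊆ interior t ∪ (closure t)ᶜ := fun x hx => by
    by_cases hxt : x ∈ interior t
    · exact Or.inl hxt
    · exact Or.inr fun hcl => h ⟨x, hx, hcl, hxt⟩
  obtain ⟨x, hxs, hxt⟩ := hst
  have hsub : s ⊆ interior t :=
    hs.subset_left_of_subset_union isOpen_interior isClosed_closure.isOpen_compl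
      (disjoint_compl_right.mono_left interior_subset_closure) hcover
      ⟨x, hxs, (hcover hxs).resolve_right (not_not.2 (subset_closure hxt))⟩
  obtain ⟨y, hys, hyt⟩ := hst'
  exact hyt (interior_subset (hsub hys))

theorem IsCompact.exists_neg_mem_frontier {E : Type*} [NormedAddCommGroup E] [NormedSpace ℝ E]
    {P : Set E} (hP : IsCompact P) {x y : E} (hx : x ∈ interior P) (hxy : x ≠ y) :
    ∃ t : ℝ, t < 0 ∧ x + t • (y - x) ∈ frontier P := by
  set L : ℝ → E := fun t => x + t • (y - x)
  have hL : IsClosedEmbedding L :=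
    (Homeomorph.addLeft x).isClosedEmbedding.comp
      (isClosedEmbedding_smul_left (sub_ne_zero.2 hxy.symm))
  have hL0 : L 0 = x := by simp [L]
  have hS : IsCompact (L ⁻¹' P) := hL.isCompact_preimage hP
  obtain ⟨t, ht0, htS⟩ := isPreconnected_Iic.inter_frontier_nonempty
    ⟨0, self_mem_Iic, by simpa [hL0] using interior_subset hx⟩
    (not_subset.1 fun h => not_bddBelow_Iic 0 (hS.bddBelow.mono h))
  have hLt : L t ∈ frontier P := hL.continuous.frontier_preimage_subset P htS
  refine ⟨t, ht0.lt_of_ne ?_, hLt⟩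
  rintro rfl
  exact hLt.2 (hL0 ▸ hx)

theorem norm_sub_div_norm_sub_add_smul_sub {E : Type*} [NormedAddCommGroup E] [NormedSpace ℝ E]
    {x y : E} (hxy : x ≠ y) {t : ℝ} (ht : t < 0) :
    ‖y - (x + t • (y - x))‖ / ‖x - (x + t • (y - x))‖ = (1 - t) / -t := by
  have hy : y - (x + t • (y - x)) = (1 - t) • (y - x) := by module
  have hx : x - (x + t • (y - x)) = (-t) • (y - x) := by module
  have hyx : ‖y - x‖ ≠ 0 := norm_ne_zero_iff.2 (sub_ne_zero.2 hxy.symm)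
  rw [hy, hx, norm_smul, norm_smul, mul_div_mul_right _ _ hyx,
    Real.norm_of_nonneg (by linarith), Real.norm_of_nonneg (by linarith)]

theorem one_le_one_sub_div_neg {t : ℝ} (ht : t < 0) : 1 ≤ (1 - t) / -t := by
  rw [one_le_div (neg_pos.2 ht)]
  linarith

theorem div_le_one_sub_div_neg {u v t : ℝ} (hu : 0 < u) (ht : t < 0) (h : 0 ≤ u + t * (v - u)) :
    v / u ≤ (1 - t) / -t := by
  rw [div_le_div_iff₀ hu (neg_pos.2 ht)]
  linarith

theorem abs_log_sub_log_le {u v t s : ℝ} (hu : 0 < u) (hv : 0 < v) (ht : t < 0) (hs : s < 0)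
    (hut : 0 ≤ u + t * (v - u)) (hvs : 0 ≤ v + s * (u - v)) :
    |log u - log v| ≤ log ((1 - t) / -t) + log ((1 - s) / -s) := by
  have hvu := log_le_log (div_pos hv hu) (div_le_one_sub_div_neg hu ht hut)
  have huv := log_le_log (div_pos hu hv) (div_le_one_sub_div_neg hv hs hvs)
  rw [log_div hv.ne' hu.ne'] at hvu
  rw [log_div hu.ne' hv.ne'] at huv
  have ht' := log_nonneg (one_le_one_sub_div_neg ht)
  have hs' := log_nonneg (one_le_one_sub_div_neg hs)
  rw [abs_le]
  constructor <;> linarith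

section InnerProductSpace

variable {E : Type*} [NormedAddCommGroup E] [InnerProductSpace ℝ E]

theorem pos_of_mem_interior_setOf_nonneg {g : E} (hg : g ≠ 0) {b : ℝ} {x : E}
    (hx : x ∈ interior {z | 0 ≤ ⟪g, z⟫ + b}) : 0 < ⟪g, x⟫ + b := by
  have hlim : Tendsto (fun ε : ℝ => x - ε • g) (𝓝[>] 0) (𝓝 x) := by
    have : Continuous (fun ε : ℝ => x - ε • g) := by fun_prop
    simpa using (this.tendsto 0).mono_left nhdsWithin_le_nhds
  obtain ⟨ε, hε, hmem⟩ :=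
    ((hlim.eventually (mem_interior_iff_mem_nhds.1 hx)).and self_mem_nhdsWithin).exists
  simp only [inner_sub_right, real_inner_smul_right, real_inner_self_eq_norm_sq] at hε
  nlinarith [mul_pos (mem_Ioi.1 hmem) (pow_pos (norm_pos_iff.2 hg) 2)]

theorem inner_add_smul_sub_add (g x y : E) (t b : ℝ) :
    ⟪g, x + t • (y - x)⟫ + b = ⟪g, x⟫ + b + t * (⟪g, y⟫ + b - (⟪g, x⟫ + b)) := by
  rw [inner_add_right, real_inner_smul_right, inner_sub_right]
  ring

theorem abs_log_sub_log_le_of_mem_interior {g x y : E} {b t s : ℝ} (ht : t < 0) (hs : s < 0)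
    (hx : x ∈ interior {z | 0 ≤ ⟪g, z⟫ + b}) (hy : y ∈ interior {z | 0 ≤ ⟪g, z⟫ + b})
    (hxt : 0 ≤ ⟪g, x + t • (y - x)⟫ + b) (hys : 0 ≤ ⟪g, y + s • (x - y)⟫ + b) :
    |log (⟪g, x⟫ + b) - log (⟪g, y⟫ + b)| ≤ log ((1 - t) / -t) + log ((1 - s) / -s) := by
  rcases eq_or_ne g 0 with rfl | hg
  · simpa using add_nonneg (log_nonneg (one_le_one_sub_div_neg ht))
      (log_nonneg (one_le_one_sub_div_neg hs))
  rw [inner_add_smul_sub_add] at hxt hys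
  exact abs_log_sub_log_le (pos_of_mem_interior_setOf_nonneg hg hx)
    (pos_of_mem_interior_setOf_nonneg hg hy) ht hs hxt hys

end InnerProductSpace

theorem norm_sum_smul_le {ι E : Type*} [Fintype ι] [SeminormedAddCommGroup E] [NormedSpace ℝ E]
    {c : ι → ℝ} {v : ι → E} {C R : ℝ} (hc : ∀ i, |c i| ≤ C) (hv : ∀ i, ‖v i‖ ≤ R) :
    ‖∑ i, c i • v i‖ ≤ Fintype.card ι * C * R := by
  calc ‖∑ i, c i • v i‖ ≤ ∑ i, ‖c i • v i‖ := norm_sum_le _ _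
    _ ≤ ∑ _i : ι, C * R := Finset.sum_le_sum fun i _ => by
        rw [norm_smul, Real.norm_eq_abs]
        exact mul_le_mul (hc i) (hv i) (norm_nonneg _) ((abs_nonneg _).trans (hc i))
    _ = Fintype.card ι * C * R := by
        rw [Finset.sum_const, Finset.card_univ, nsmul_eq_mul, mul_assoc]

theorem phi_lipschitz_general {n m : ℕ}
    (g : Fin m → EuclideanSpace ℝ (Fin n)) (b : Fin m → ℝ)
    (P : Set (EuclideanSpace ℝ (Fin n)))
    (hP : P = {x | ∀ i, 0 ≤ ⟪g i, x⟫ + b i})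
    (hPcomp : IsCompact P)
    (R : ℝ) (hR : ∀ i, ‖g i‖ ≤ R)
    (d : EuclideanSpace ℝ (Fin n) → EuclideanSpace ℝ (Fin n) → ℝ)
    (hd0 : ∀ x, d x x = 0)
    (hd : ∀ x y, x ∈ interior P → y ∈ interior P → x ≠ y →
      ∀ a1 a2 : EuclideanSpace ℝ (Fin n), a1 ∈ frontier P → a2 ∈ frontier P →
      (∃ t1 t2 : ℝ, t1 < 0 ∧ 1 < t2 ∧ a1 = x + t1 • (y - x) ∧ a2 = x + t2 • (y - x)) →
      d x y = (1/2) * Real.log ((‖y - a1‖ / ‖x - a1‖) * (‖x - a2‖ / ‖y - a2‖)))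
    (Φ : EuclideanSpace ℝ (Fin n) → EuclideanSpace ℝ (Fin n))
    (hΦ : ∀ x, Φ x = ∑ i, Real.log (⟪g i, x⟫ + b i) • g i) :
    ∀ x ∈ interior P, ∀ y ∈ interior P,
      ‖Φ x - Φ y‖ ≤ 2 * m * R * d x y := by
  intro x hx y hy
  rcases eq_or_ne x y with rfl | hxy
  · simp [hd0]
  obtain ⟨t, ht, hxt⟩ := hPcomp.exists_neg_mem_frontier hx hxy
  obtain ⟨s, hs, hys⟩ := hPcomp.exists_neg_mem_frontier hy hxy.symm
  have hdist : log ((1 - t) / -t) + log ((1 - s) / -s) = 2 * d x y := by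
    rw [hd x y hx hy hxy _ _ hxt hys ⟨t, 1 - s, ht, by linarith, rfl, by module⟩,
      norm_sub_div_norm_sub_add_smul_sub hxy ht, norm_sub_div_norm_sub_add_smul_sub hxy.symm hs,
      log_mul (zero_lt_one.trans_le (one_le_one_sub_div_neg ht)).ne'
        (zero_lt_one.trans_le (one_le_one_sub_div_neg hs)).ne']
    ring
  have hhalf : ∀ i, P ⊆ {z | 0 ≤ ⟪g i, z⟫ + b i} := by
    subst hP
    exact fun i z hz => hz i
  have hterm : ∀ i, |log (⟪g i, x⟫ + b i) - log (⟪g i, y⟫ + b i)| ≤ 2 * d x y := fun i =>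
    hdist ▸ abs_log_sub_log_le_of_mem_interior ht hs
      (interior_mono (hhalf i) hx) (interior_mono (hhalf i) hy)
      (hhalf i (hPcomp.isClosed.frontier_subset hxt))
      (hhalf i (hPcomp.isClosed.frontier_subset hys))
  calc ‖Φ x - Φ y‖ = ‖∑ i, (log (⟪g i, x⟫ + b i) - log (⟪g i, y⟫ + b i)) • g i‖ := by
        simp only [hΦ, sub_smul, Finset.sum_sub_distrib]
    _ ≤ Fintype.card (Fin m) * (2 * d x y) * R := norm_sum_smul_le hterm hR
    _ = 2 * m * R * d x y := by
        rw [Fintype.card_fin]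
        ring

/-- The map `Φ(x) = Σᵢ log(fᵢ(x)) ∇fᵢ` is Lipschitz from `(int P, d)` to Euclidean space,
with Lipschitz constant `2mR` where `R = maxᵢ ‖∇fᵢ‖`. -/
theorem phi_lipschitz {n m : ℕ}
    (g : Fin m → EuclideanSpace ℝ (Fin n)) (b : Fin m → ℝ)
    (P : Set (EuclideanSpace ℝ (Fin n)))
    (hP : P = {x | ∀ i, 0 ≤ ⟪g i, x⟫ + b i})
    (hPcomp : IsCompact P) (hPint : (interior P).Nonempty)
    (R : ℝ) (hR : ∀ i, ‖g i‖ ≤ R)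
    (d : EuclideanSpace ℝ (Fin n) → EuclideanSpace ℝ (Fin n) → ℝ)
    (hd0 : ∀ x, d x x = 0)
    (hd : ∀ x y, x ∈ interior P → y ∈ interior P → x ≠ y →
      ∀ a1 a2 : EuclideanSpace ℝ (Fin n), a1 ∈ frontier P → a2 ∈ frontier P →
      (∃ t1 t2 : ℝ, t1 < 0 ∧ 1 < t2 ∧ a1 = x + t1 • (y - x) ∧ a2 = x + t2 • (y - x)) →
      d x y = (1/2) * Real.log ((‖y - a1‖ / ‖x - a1‖) * (‖x - a2‖ / ‖y - a2‖)))
    (Φ : EuclideanSpace ℝ (Fin n) → EuclideanSpace ℝ (Fin n))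
    (hΦ : ∀ x, Φ x = ∑ i, Real.log (⟪g i, x⟫ + b i) • g i) :
    ∀ x ∈ interior P, ∀ y ∈ interior P,
      ‖Φ x - Φ y‖ ≤ 2 * m * R * d x y :=
  phi_lipschitz_general g b P hP hPcomp R hR d hd0 hd Φ hΦ
end

section
/- The map Φ(x) = Σ_{i=1}^m log(f_i(x)) ∇f_i is injective on the interior of the polytope P; in fact, for distinct x, y ∈ int P one has ⟨Φ(x) − Φ(y), x − y⟩ > 0. -/
/-!
With `fᵢ x = ⟪gᵢ, x⟫ + bᵢ` one has
`⟪Φ x - Φ y, x - y⟫ = ∑ᵢ (log fᵢ x - log fᵢ y) (fᵢ x - fᵢ y)`.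
Every term is nonnegative since `log` is increasing: a nonconstant `fᵢ` is positive on the
interior, and a constant one contributes `0`. Some term is positive, for if all `fᵢ` agreed at
`x ≠ y`, the whole line through `x` and `y` would lie in the bounded set `P`.
-/

open RealInnerProductSpace Real Set Bornology

theorem log_sub_log_mul_sub_pos {a b : ℝ} (ha : 0 < a) (hb : 0 < b) (hab : a ≠ b) :
    0 < (log a - log b) * (a - b) := by
  rcases hab.lt_or_gt with h | h
  · exact mul_pos_of_neg_of_neg (sub_neg.2 (log_lt_log ha h)) (sub_neg.2 h)
  · exact mul_pos (sub_pos.2 (log_lt_log hb h)) (sub_pos.2 h)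

theorem eq_zero_of_forall_add_smul_mem {E : Type*} [NormedAddCommGroup E] [NormedSpace ℝ E]
    {S : Set E} (hS : IsBounded S) {x v : E} (hline : ∀ t : ℝ, x + t • v ∈ S) : v = 0 := by
  obtain ⟨R, hR⟩ := hS.exists_norm_le
  by_contra hv
  have hv_pos : 0 < ‖v‖ := norm_pos_iff.2 hv
  have hx : ‖x‖ ≤ R := by simpa using hR _ (hline 0)
  have hR0 : 0 ≤ R := (norm_nonneg x).trans hx
  set t := (2 * R + 1) / ‖v‖
  have ht : ‖t • v‖ = 2 * R + 1 := by
    rw [norm_smul, norm_of_nonneg (div_nonneg (by linarith) hv_pos.le),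
      div_mul_cancel₀ _ hv_pos.ne']
  have : ‖t • v‖ ≤ 2 * R := calc
    ‖t • v‖ = ‖(x + t • v) - x‖ := by rw [add_sub_cancel_left]
    _ ≤ ‖x + t • v‖ + ‖x‖ := norm_sub_le _ _
    _ ≤ 2 * R := by linarith [hR _ (hline t)]
  linarith

variable {E : Type*} [NormedAddCommGroup E] [InnerProductSpace ℝ E]

theorem interior_setOf_inner_add_nonneg {v : E} (hv : v ≠ 0) (c : ℝ) :
    interior {x | 0 ≤ ⟪v, x⟫ + c} = {x | 0 < ⟪v, x⟫ + c} := by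
  have hf : innerSL ℝ v ≠ 0 := fun h ↦ hv <| by
    simpa using congrArg (fun f : E →L[ℝ] ℝ ↦ f v) h
  have h := ((innerSL ℝ v).isOpenMap_of_ne_zero hf).preimage_interior_eq_interior_preimage
    (innerSL ℝ v).continuous (Ici (-c))
  have hpre : {x | 0 ≤ ⟪v, x⟫ + c} = innerSL ℝ v ⁻¹' Ici (-c) := by
    ext; simp [neg_le_iff_add_nonneg]
  rw [hpre, ← h, interior_Ici]
  ext; simp [neg_lt_iff_pos_add]

section Polyhedron

variable {ι : Type*} (g : ι → E) (b : ι → ℝ)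

def polyhedron : Set E := {x | ∀ i, 0 ≤ ⟪g i, x⟫ + b i}

variable {g b}

theorem inner_add_pos_of_mem_interior_polyhedron {x : E} (hx : x ∈ interior (polyhedron g b))
    {i : ι} (hi : g i ≠ 0) : 0 < ⟪g i, x⟫ + b i := by
  have hsub : polyhedron g b ⊆ {x | 0 ≤ ⟪g i, x⟫ + b i} := fun x hx ↦ hx i
  simpa [interior_setOf_inner_add_nonneg hi] using interior_mono hsub hx

theorem exists_inner_ne_of_isBounded_polyhedron (hP : IsBounded (polyhedron g b)) {x y : E}
    (hx : x ∈ polyhedron g b) (hxy : x ≠ y) : ∃ i, ⟪g i, x⟫ ≠ ⟪g i, y⟫ := by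
  by_contra! h
  have hline : ∀ t : ℝ, x + t • (x - y) ∈ polyhedron g b := fun t i ↦ by
    simpa [inner_add_right, inner_smul_right, inner_sub_right, h i] using hx i
  exact hxy (sub_eq_zero.1 (eq_zero_of_forall_add_smul_mem hP hline))

theorem log_inner_add_sub_mul_inner_pos {x y : E}
    (hx : x ∈ interior (polyhedron g b)) (hy : y ∈ interior (polyhedron g b)) {i : ι}
    (hi : ⟪g i, x⟫ ≠ ⟪g i, y⟫) :
    0 < (log (⟪g i, x⟫ + b i) - log (⟪g i, y⟫ + b i)) * ⟪g i, x - y⟫ := by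
  have hg : g i ≠ 0 := by rintro hg; simp [hg] at hi
  have := log_sub_log_mul_sub_pos (inner_add_pos_of_mem_interior_polyhedron hx hg)
    (inner_add_pos_of_mem_interior_polyhedron hy hg) (by simpa using hi)
  rwa [add_sub_add_right_eq_sub, ← inner_sub_right] at this

theorem inner_sum_log_smul_sub_sum_log_smul [Fintype ι] (x y : E) :
    ⟪∑ i, log (⟪g i, x⟫ + b i) • g i - ∑ i, log (⟪g i, y⟫ + b i) • g i, x - y⟫ =
      ∑ i, (log (⟪g i, x⟫ + b i) - log (⟪g i, y⟫ + b i)) * ⟪g i, x - y⟫ := by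
  simp only [← Finset.sum_sub_distrib, ← sub_smul, sum_inner, real_inner_smul_left]

theorem inner_sum_log_smul_sub_pos [Fintype ι] (hP : IsBounded (polyhedron g b)) {x y : E}
    (hx : x ∈ interior (polyhedron g b)) (hy : y ∈ interior (polyhedron g b)) (hxy : x ≠ y) :
    0 < ⟪∑ i, log (⟪g i, x⟫ + b i) • g i - ∑ i, log (⟪g i, y⟫ + b i) • g i, x - y⟫ := by
  obtain ⟨j, hj⟩ := exists_inner_ne_of_isBounded_polyhedron hP (interior_subset hx) hxy
  rw [inner_sum_log_smul_sub_sum_log_smul]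
  refine Finset.sum_pos' (fun i _ ↦ ?_)
    ⟨j, Finset.mem_univ j, log_inner_add_sub_mul_inner_pos hx hy hj⟩
  by_cases hi : ⟪g i, x⟫ = ⟪g i, y⟫
  · simp [inner_sub_right, hi]
  · exact (log_inner_add_sub_mul_inner_pos hx hy hi).le

end Polyhedron

theorem phi_injective_general {n m : ℕ}
    (g : Fin m → EuclideanSpace ℝ (Fin n)) (b : Fin m → ℝ)
    (P : Set (EuclideanSpace ℝ (Fin n)))
    (hP : P = {x | ∀ i, 0 ≤ ⟪g i, x⟫ + b i})
    (hPcomp : IsCompact P)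
    (Φ : EuclideanSpace ℝ (Fin n) → EuclideanSpace ℝ (Fin n))
    (hΦ : ∀ x, Φ x = ∑ i, Real.log (⟪g i, x⟫ + b i) • g i) :
    (∀ x ∈ interior P, ∀ y ∈ interior P, x ≠ y → 0 < ⟪Φ x - Φ y, x - y⟫) ∧
      Set.InjOn Φ (interior P) := by
  subst hP
  have hmono : ∀ x ∈ interior (polyhedron g b), ∀ y ∈ interior (polyhedron g b), x ≠ y →
      0 < ⟪Φ x - Φ y, x - y⟫ :=
    fun x hx y hy hxy ↦ hΦ x ▸ hΦ y ▸ inner_sum_log_smul_sub_pos hPcomp.isBounded hx hy hxy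
  refine ⟨hmono, fun x hx y hy hΦxy ↦ by_contra fun hxy ↦ ?_⟩
  simpa [hΦxy] using hmono x hx y hy hxy

/-- The map `Φ(x) = Σᵢ log(fᵢ(x)) ∇fᵢ` satisfies `⟨Φ(x) − Φ(y), x − y⟩ > 0` for distinct
interior points, and in particular it is injective on the interior of the polytope. -/
theorem phi_injective {n m : ℕ}
    (g : Fin m → EuclideanSpace ℝ (Fin n)) (b : Fin m → ℝ)
    (P : Set (EuclideanSpace ℝ (Fin n)))
    (hP : P = {x | ∀ i, 0 ≤ ⟪g i, x⟫ + b i})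
    (hPcomp : IsCompact P) (hPint : (interior P).Nonempty)
    (Φ : EuclideanSpace ℝ (Fin n) → EuclideanSpace ℝ (Fin n))
    (hΦ : ∀ x, Φ x = ∑ i, Real.log (⟪g i, x⟫ + b i) • g i) :
    (∀ x ∈ interior P, ∀ y ∈ interior P, x ≠ y → 0 < ⟪Φ x - Φ y, x - y⟫) ∧
      Set.InjOn Φ (interior P) :=
  phi_injective_general g b P hP hPcomp Φ hΦ
end

section
/- For a compact convex polytope P = {x : f_i(x) ≥ 0, i=1,…,m}, there exists ε > 0 such that for every x ∈ int P, the intersection ⋂_{i ∈ I_ε(x)} P_i is nonempty, where I_ε(x) = {i : f_i(x) < ε} and P_i = {f_i = 0}. -/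
/-!
If the facets indexed by `S` have no common point of `P`, then `∑_{i ∈ S} fᵢ` is positive on the
compact set `P` and hence bounded below there by some `δ_S > 0`; so no point of `P` can have all
`fᵢ`, `i ∈ S`, below `δ_S / (|S| + 1)`. Taking `ε` to be the least of these finitely many
thresholds, the facets with `fᵢ(x) < ε` always share a point of `P`.
-/

open RealInnerProductSpace

section CommonZero

variable {X ι : Type*} [TopologicalSpace X] {K : Set X} {f : ι → X → ℝ}

theorem IsCompact.exists_pos_le_sum_of_forall_exists_ne_zero (hK : IsCompact K) (S : Finset ι)
    (hf : ∀ i ∈ S, ContinuousOn (f i) K) (hf0 : ∀ i ∈ S, ∀ x ∈ K, 0 ≤ f i x)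
    (hS : ∀ y ∈ K, ∃ i ∈ S, f i y ≠ 0) :
    ∃ δ > 0, ∀ x ∈ K, δ ≤ ∑ i ∈ S, f i x := by
  have hsum_pos : ∀ x ∈ K, 0 < ∑ i ∈ S, f i x := by
    intro x hx
    obtain ⟨i, hi, hne⟩ := hS x hx
    exact (Finset.sum_pos_iff_of_nonneg fun j hj => hf0 j hj x hx).2
      ⟨i, hi, (hf0 i hi x hx).lt_of_ne' hne⟩
  exact hK.exists_forall_le' (continuousOn_finsetSum S hf) hsum_pos

theorem IsCompact.exists_pos_forall_lt_imp_common_zero (hK : IsCompact K) (S : Finset ι)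
    (hf : ∀ i ∈ S, ContinuousOn (f i) K) (hf0 : ∀ i ∈ S, ∀ x ∈ K, 0 ≤ f i x) :
    ∃ δ > 0, ∀ x ∈ K, (∀ i ∈ S, f i x < δ) → ∃ y ∈ K, ∀ i ∈ S, f i y = 0 := by
  by_cases hzero : ∃ y ∈ K, ∀ i ∈ S, f i y = 0
  · exact ⟨1, one_pos, fun _ _ _ => hzero⟩
  push Not at hzero
  obtain ⟨δ, hδ, hle⟩ := hK.exists_pos_le_sum_of_forall_exists_ne_zero S hf hf0 hzero
  have hcard : (0 : ℝ) < S.card + 1 := by positivity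
  refine ⟨δ / (S.card + 1), div_pos hδ hcard, fun x hx hlt => ((hle x hx).not_gt ?_).elim⟩
  calc ∑ i ∈ S, f i x ≤ S.card * (δ / (S.card + 1)) := by
        simpa using Finset.sum_le_card_nsmul S (f · x) _ fun i hi => (hlt i hi).le
    _ < δ := by
        rw [mul_div_assoc', div_lt_iff₀ hcard]
        linarith

theorem IsCompact.exists_pos_forall_exists_common_zero [Finite ι] (hK : IsCompact K)
    (hf : ∀ i, ContinuousOn (f i) K) (hf0 : ∀ i, ∀ x ∈ K, 0 ≤ f i x) :
    ∃ ε > 0, ∀ x ∈ K, ∃ y ∈ K, ∀ i, f i x < ε → f i y = 0 := by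
  classical
  have := Fintype.ofFinite ι
  choose δ hδ hcommon using fun S : Finset ι =>
    hK.exists_pos_forall_lt_imp_common_zero S (fun i _ => hf i) (fun i _ => hf0 i)
  refine ⟨Finset.univ.inf' Finset.univ_nonempty δ,
    (Finset.lt_inf'_iff _).2 fun S _ => hδ S, fun x hx => ?_⟩
  set S := Finset.univ.filter fun i => f i x < Finset.univ.inf' Finset.univ_nonempty δ
  have hS : ∀ i ∈ S, f i x < δ S := fun i hi =>
    (Finset.mem_filter.1 hi).2.trans_le (Finset.inf'_le _ (Finset.mem_univ S))
  obtain ⟨y, hy, hzero⟩ := hcommon S x hx hS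
  exact ⟨y, hy, fun i hi => hzero i (Finset.mem_filter.2 ⟨Finset.mem_univ i, hi⟩)⟩

end CommonZero

theorem exists_eps_common_point_general {n m : ℕ}
    (g : Fin m → EuclideanSpace ℝ (Fin n)) (b : Fin m → ℝ)
    (P : Set (EuclideanSpace ℝ (Fin n)))
    (hP : P = {x | ∀ i, 0 ≤ ⟪g i, x⟫ + b i})
    (hPcomp : IsCompact P) :
    ∃ ε > 0, ∀ x ∈ interior P,
      ∃ p : EuclideanSpace ℝ (Fin n), ∀ i, ⟪g i, x⟫ + b i < ε → ⟪g i, p⟫ + b i = 0 := by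
  have hnonneg : ∀ i, ∀ x ∈ P, 0 ≤ ⟪g i, x⟫ + b i := by
    intro i x hx
    rw [hP] at hx
    exact hx i
  obtain ⟨ε, hε, hcommon⟩ := hPcomp.exists_pos_forall_exists_common_zero
    (fun i => by fun_prop) hnonneg
  refine ⟨ε, hε, fun x hx => ?_⟩
  obtain ⟨p, -, hp⟩ := hcommon x (interior_subset hx)
  exact ⟨p, hp⟩

/-- For a compact convex polytope `P = {x : fᵢ(x) ≥ 0}` there is `ε > 0` such that for every
interior point `x`, the hyperplanes `Pᵢ = {fᵢ = 0}` with `fᵢ(x) < ε` have a common point. -/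
theorem exists_eps_common_point {n m : ℕ}
    (g : Fin m → EuclideanSpace ℝ (Fin n)) (b : Fin m → ℝ)
    (hg : ∀ i, g i ≠ 0)
    (P : Set (EuclideanSpace ℝ (Fin n)))
    (hP : P = {x | ∀ i, 0 ≤ ⟪g i, x⟫ + b i})
    (hPcomp : IsCompact P) (hPint : (interior P).Nonempty) :
    ∃ ε > 0, ∀ x ∈ interior P,
      ∃ p : EuclideanSpace ℝ (Fin n), ∀ i, ⟪g i, x⟫ + b i < ε → ⟪g i, p⟫ + b i = 0 :=
  exists_eps_common_point_general g b P hP hPcomp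
end

section
/- Let P ⊂ ℝⁿ be a polyhedral cone {x : f_i(x) ≥ 0, i=1,…,m} defined by linear functions f_i, containing no line and with nonempty interior, and let Φ(x) = Σ_i log(f_i(x)) ∇f_i on int P. Then there is a constant C > 0 such that ‖dΦ_x(w)‖₂ ≥ C ‖w‖_x for all x ∈ int P and w ∈ ℝⁿ, where ‖·‖_x is the Hilbert Finsler norm of the cone P (defined via the chord through x in direction w, with the convention 1/t = 0 when an endpoint is at infinity). -/
/-!
Write `bᵢ = ⟪gᵢ, w⟫`, `xᵢ = ⟪gᵢ, x⟫` and `aᵢ = bᵢ / xᵢ`, so that `dΦₓ(w) = ∑ aᵢ gᵢ`. Along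
`x ± t w` the constraint `i` stays satisfied up to `t = xᵢ / |bᵢ|`, so both reciprocal chord
parameters, hence `‖w‖ₓ`, are at most `∑ |aᵢ|`. For interior `x` we have `xᵢ > 0` unless
`gᵢ = 0`, so each `aᵢ` has the sign of `bᵢ` and `⟪dΦₓ(w), w⟫ = ∑ |aᵢ| |bᵢ| ≥ δ ∑ |aᵢ|`, with `δ`
the smallest nonzero `|bᵢ|`; Cauchy–Schwarz then bounds `‖dΦₓ(w)‖` below by a multiple of
`∑ |aᵢ|`. The constant depends on `w`, but the sign condition on `a` only depends on the sign
pattern of `b`, which takes finitely many values; one representative `w` per pattern gives a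
uniform constant.
-/

open RealInnerProductSpace

/-- The reciprocal `1/t₁` of the chord parameter `t₁ = sup{t > 0 : x + t w ∈ P}`, with the
convention `1/∞ := 0` when the ray stays in `P` forever. -/
noncomputable def chordRecip {n : ℕ} (P : Set (EuclideanSpace ℝ (Fin n)))
    (x w : EuclideanSpace ℝ (Fin n)) : ℝ :=
  open Classical in
  if BddAbove {t : ℝ | 0 < t ∧ x + t • w ∈ P} then
    (sSup {t : ℝ | 0 < t ∧ x + t • w ∈ P})⁻¹ else 0

/-- The Hilbert Finsler norm of an unbounded convex set: `‖w‖ₓ = (1/2)(1/t₁ + 1/t₂)`. -/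
noncomputable def coneFinsler {n : ℕ} (P : Set (EuclideanSpace ℝ (Fin n)))
    (x w : EuclideanSpace ℝ (Fin n)) : ℝ :=
  (1/2) * (chordRecip P x w + chordRecip P x (-w))

open Filter Topology

section InnerProductSpace

variable {ι E : Type*} [Fintype ι] [NormedAddCommGroup E] [InnerProductSpace ℝ E]

theorem inner_pos_of_mem_interior_setOf_inner_nonneg {v x : E}
    (hx : x ∈ interior {y | 0 ≤ ⟪v, y⟫}) (hv : v ≠ 0) : 0 < ⟪v, x⟫ := by
  have hnear : ∀ᶠ ε in 𝓝[>] (0 : ℝ), x - ε • v ∈ interior {y | 0 ≤ ⟪v, y⟫} :=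
    nhdsWithin_le_nhds <| (Continuous.tendsto (by fun_prop) 0).eventually_mem
      (by simpa using isOpen_interior.mem_nhds hx)
  obtain ⟨ε, hεx, hε⟩ := (hnear.and eventually_mem_nhdsWithin).exists
  have hvv : 0 < ⟪v, v⟫ := real_inner_self_pos.2 hv
  have : 0 ≤ ⟪v, x⟫ - ε * ⟪v, v⟫ := by
    simpa [inner_sub_right, real_inner_smul_right] using interior_subset hεx
  nlinarith [mul_pos (show (0 : ℝ) < ε from hε) hvv]

theorem mul_abs_le_mul_of_sign_eq {δ a b : ℝ} (hδ : b ≠ 0 → δ ≤ |b|)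
    (hab : a ≠ 0 → SignType.sign a = SignType.sign b) : δ * |a| ≤ a * b := by
  rcases eq_or_ne a 0 with rfl | ha
  · simp
  have hb : b ≠ 0 := by simpa [hab ha] using sign_ne_zero.2 ha
  have hab_nonneg : 0 ≤ a * b := by
    rw [← sign_nonneg_iff, sign_mul, hab ha]
    rcases SignType.sign b with _ | _ | _ <;> decide
  calc δ * |a| ≤ |b| * |a| := mul_le_mul_of_nonneg_right (hδ hb) (abs_nonneg a)
    _ = a * b := by rw [← abs_mul, mul_comm, abs_of_nonneg hab_nonneg]

theorem mul_sum_abs_le_norm_sum_smul_mul_norm (g : ι → E) (w : E) (a : ι → ℝ) {δ : ℝ}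
    (h : ∀ i, δ * |a i| ≤ a i * ⟪g i, w⟫) :
    δ * ∑ i, |a i| ≤ ‖∑ i, a i • g i‖ * ‖w‖ :=
  calc δ * ∑ i, |a i| ≤ ∑ i, a i * ⟪g i, w⟫ := by
        rw [Finset.mul_sum]; exact Finset.sum_le_sum fun i _ => h i
    _ = ⟪∑ i, a i • g i, w⟫ := by simp only [sum_inner, real_inner_smul_left]
    _ ≤ ‖∑ i, a i • g i‖ * ‖w‖ := real_inner_le_norm _ _

theorem exists_pos_mul_sum_abs_le_norm_sum_smul (g : ι → E) (w : E) :
    ∃ C > 0, ∀ a : ι → ℝ, (∀ i, a i ≠ 0 → SignType.sign (a i) = SignType.sign ⟪g i, w⟫) →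
      C * ∑ i, |a i| ≤ ‖∑ i, a i • g i‖ := by
  have hsmall : ∀ i, ∀ᶠ δ in 𝓝[>] (0 : ℝ), ⟪g i, w⟫ ≠ 0 → δ ≤ |⟪g i, w⟫| := fun i => by
    rcases eq_or_ne ⟪g i, w⟫ 0 with h | h
    · exact .of_forall fun _ h' => absurd h h'
    · exact ((eventually_le_nhds (abs_pos.2 h)).mono fun _ hδ _ => hδ).filter_mono
        nhdsWithin_le_nhds
  obtain ⟨δ, hδ, hδpos⟩ := ((eventually_all.2 hsmall).and eventually_mem_nhdsWithin).exists
  refine ⟨δ / (‖w‖ + 1), div_pos hδpos (by positivity), fun a ha => ?_⟩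
  have hbound := mul_sum_abs_le_norm_sum_smul_mul_norm g w a fun i =>
    mul_abs_le_mul_of_sign_eq (hδ i) (ha i)
  rw [div_mul_eq_mul_div, div_le_iff₀ (by positivity)]
  nlinarith [norm_nonneg (∑ i, a i • g i)]

theorem exists_pos_forall_mul_sum_abs_le_norm_sum_smul (g : ι → E) :
    ∃ C > 0, ∀ (w : E) (a : ι → ℝ),
      (∀ i, a i ≠ 0 → SignType.sign (a i) = SignType.sign ⟪g i, w⟫) →
      C * ∑ i, |a i| ≤ ‖∑ i, a i • g i‖ := by
  have hpattern : ∀ σ : ι → SignType, ∀ᶠ C in 𝓝[>] (0 : ℝ), ∀ (w : E) (a : ι → ℝ),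
      (fun i => SignType.sign ⟪g i, w⟫) = σ → (∀ i, a i ≠ 0 → SignType.sign (a i) = σ i) →
      C * ∑ i, |a i| ≤ ‖∑ i, a i • g i‖ := fun σ => by
    by_cases hσ : ∃ w₀ : E, (fun i => SignType.sign ⟪g i, w₀⟫) = σ
    · obtain ⟨w₀, rfl⟩ := hσ
      obtain ⟨C₀, hC₀, hbound⟩ := exists_pos_mul_sum_abs_le_norm_sum_smul g w₀
      filter_upwards [Ioo_mem_nhdsGT hC₀] with C hC w a _ ha
      calc C * ∑ i, |a i| ≤ C₀ * ∑ i, |a i| :=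
            mul_le_mul_of_nonneg_right hC.2.le (Finset.sum_nonneg fun i _ => abs_nonneg _)
        _ ≤ ‖∑ i, a i • g i‖ := hbound a ha
    · exact .of_forall fun _ w _ hw => absurd ⟨w, hw⟩ hσ
  obtain ⟨C, hC, hCpos⟩ := ((eventually_all.2 hpattern).and eventually_mem_nhdsWithin).exists
  exact ⟨C, hCpos, fun w a => hC _ w a rfl⟩

end InnerProductSpace

section HilbertFinsler

variable {n : ℕ}

theorem chordRecip_le {P : Set (EuclideanSpace ℝ (Fin n))} {x w : EuclideanSpace ℝ (Fin n)}
    {S : ℝ} (hS : 0 ≤ S) (hray : ∀ t, 0 < t → t * S ≤ 1 → x + t • w ∈ P) :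
    chordRecip P x w ≤ S := by
  unfold chordRecip
  split_ifs with hB
  · have hSpos : 0 < S := hS.lt_of_ne fun hS0 => not_bddAbove_Ioi (0 : ℝ) <|
      hB.mono fun t ht => show 0 < t ∧ _ from
        ⟨ht, hray t ht (by rw [← hS0, mul_zero]; exact zero_le_one)⟩
    have hmem : S⁻¹ ∈ {t : ℝ | 0 < t ∧ x + t • w ∈ P} :=
      ⟨inv_pos.2 hSpos, hray _ (inv_pos.2 hSpos) (inv_mul_cancel₀ hSpos.ne').le⟩
    calc (sSup {t : ℝ | 0 < t ∧ x + t • w ∈ P})⁻¹ ≤ S⁻¹⁻¹ :=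
          inv_anti₀ (inv_pos.2 hSpos) (le_csSup hB hmem)
      _ = S := inv_inv S
  · exact hS

variable {ι : Type*} [Fintype ι]

theorem chordRecip_setOf_inner_nonneg_le (g : ι → EuclideanSpace ℝ (Fin n))
    {x : EuclideanSpace ℝ (Fin n)} (hx : ∀ i, g i ≠ 0 → 0 < ⟪g i, x⟫)
    (w : EuclideanSpace ℝ (Fin n)) :
    chordRecip {y | ∀ i, 0 ≤ ⟪g i, y⟫} x w ≤ ∑ i, |⟪g i, w⟫ / ⟪g i, x⟫| := by
  refine chordRecip_le (Finset.sum_nonneg fun i _ => abs_nonneg _) fun t ht htS i => ?_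
  rw [inner_add_right, real_inner_smul_right]
  rcases eq_or_ne (g i) 0 with hg | hg
  · simp [hg]
  have hxi := hx i hg
  have hi : |⟪g i, w⟫| ≤ (∑ j, |⟪g j, w⟫ / ⟪g j, x⟫|) * ⟪g i, x⟫ := by
    rw [← div_le_iff₀ hxi, ← abs_of_pos hxi, ← abs_div]
    exact Finset.single_le_sum (f := fun j => |⟪g j, w⟫ / ⟪g j, x⟫|)
      (fun j _ => abs_nonneg _) (Finset.mem_univ i)
  nlinarith [neg_abs_le ⟪g i, w⟫, mul_le_mul_of_nonneg_left hi ht.le]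

theorem coneFinsler_setOf_inner_nonneg_le (g : ι → EuclideanSpace ℝ (Fin n))
    {x : EuclideanSpace ℝ (Fin n)} (hx : ∀ i, g i ≠ 0 → 0 < ⟪g i, x⟫)
    (w : EuclideanSpace ℝ (Fin n)) :
    coneFinsler {y | ∀ i, 0 ≤ ⟪g i, y⟫} x w ≤ ∑ i, |⟪g i, w⟫ / ⟪g i, x⟫| := by
  have hplus := chordRecip_setOf_inner_nonneg_le g hx w
  have hminus := chordRecip_setOf_inner_nonneg_le g hx (-w)
  simp only [inner_neg_right, neg_div, abs_neg] at hminus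
  unfold coneFinsler
  linarith

end HilbertFinsler

theorem cone_dphi_lower_bound_general {n m : ℕ}
    (g : Fin m → EuclideanSpace ℝ (Fin n))
    (P : Set (EuclideanSpace ℝ (Fin n)))
    (hP : P = {x | ∀ i, 0 ≤ ⟪g i, x⟫}) :
    ∃ C > 0, ∀ x ∈ interior P, ∀ w : EuclideanSpace ℝ (Fin n),
      C * coneFinsler P x w ≤ ‖∑ i, ((⟪g i, w⟫ / ⟪g i, x⟫) • g i)‖ := by
  subst hP
  obtain ⟨C, hC, hbound⟩ := exists_pos_forall_mul_sum_abs_le_norm_sum_smul g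
  refine ⟨C, hC, fun x hx w => ?_⟩
  have hpos : ∀ i, g i ≠ 0 → 0 < ⟪g i, x⟫ := fun i => inner_pos_of_mem_interior_setOf_inner_nonneg
    (interior_mono (fun _ (hy : ∀ j, 0 ≤ ⟪g j, _⟫) => hy i) hx)
  have hsign : ∀ i, ⟪g i, w⟫ / ⟪g i, x⟫ ≠ 0 →
      SignType.sign (⟪g i, w⟫ / ⟪g i, x⟫) = SignType.sign ⟪g i, w⟫ := fun i hi => by
    have hxi : 0 < ⟪g i, x⟫ := hpos i fun hg => hi (by simp [hg])
    rw [div_eq_mul_inv, sign_mul, sign_pos (inv_pos.2 hxi), mul_one]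
  calc C * coneFinsler _ x w ≤ C * ∑ i, |⟪g i, w⟫ / ⟪g i, x⟫| :=
        mul_le_mul_of_nonneg_left (coneFinsler_setOf_inner_nonneg_le g hpos w) hC.le
    _ ≤ _ := hbound w _ hsign

/-- For a polyhedral cone `P = {x : fᵢ(x) ≥ 0}` (linear `fᵢ`, no line, nonempty interior),
there is `C > 0` with `‖dΦₓ(w)‖ ≥ C ‖w‖ₓ` for all interior `x` and all `w`, where `‖·‖ₓ` is
the Hilbert Finsler norm of the cone. -/
theorem cone_dphi_lower_bound {n m : ℕ}
    (g : Fin m → EuclideanSpace ℝ (Fin n))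
    (P : Set (EuclideanSpace ℝ (Fin n)))
    (hP : P = {x | ∀ i, 0 ≤ ⟪g i, x⟫})
    (hnoline : ∀ v : EuclideanSpace ℝ (Fin n), v ∈ P → -v ∈ P → v = 0)
    (hPint : (interior P).Nonempty) :
    ∃ C > 0, ∀ x ∈ interior P, ∀ w : EuclideanSpace ℝ (Fin n),
      C * coneFinsler P x w ≤ ‖∑ i, ((⟪g i, w⟫ / ⟪g i, x⟫) • g i)‖ :=
  cone_dphi_lower_bound_general g P hP
end

section
/- For a polyhedral cone P = {x : f_i(x) ≥ 0} with linear f_i, no line, and nonempty interior, and u := Σ_i ∇f_i: for x₀ ∈ int P, the slice P ∩ (x₀ + u^⊥) is a compact convex polytope of dimension n − 1. -/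
/-!
Write `P` as the inner dual cone of the `gᵢ`. Since `P` contains no line, `⟪u, x⟫ = Σᵢ ⟪gᵢ, x⟫`
is positive on `P \ {0}`, hence, by compactness of `P` ∩ unit sphere, at least `ε ‖x‖` on `P`;
the slice, where `⟪u, x⟫ = ⟪u, x₀⟫`, is therefore bounded. It is the intersection of `P` with the
affine hyperplane through `x₀` with direction `u^⊥`, and since `P` is a neighbourhood of `x₀` its
direction span is all of `u^⊥`, which has dimension `n - 1`: `u ≠ 0` since `P` is not `{0}`.
-/

open RealInnerProductSpace Filter Topology

section Cone

variable {V : Type*} [NormedAddCommGroup V] [InnerProductSpace ℝ V]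

namespace ProperCone

theorem exists_pos_mul_norm_le_inner [FiniteDimensional ℝ V] (C : ProperCone ℝ V) {u : V}
    (hu : ∀ x ∈ C, x ≠ 0 → 0 < ⟪u, x⟫) : ∃ ε > 0, ∀ x ∈ C, ε * ‖x‖ ≤ ⟪u, x⟫ := by
  obtain ⟨ε, hε, hεle⟩ := ((isCompact_sphere (0 : V) 1).inter_left C.isClosed).exists_forall_le'
    (f := fun x => ⟪u, x⟫) (continuous_const.inner continuous_id).continuousOn
    fun x hx => hu x hx.1 (ne_zero_of_mem_unit_sphere ⟨x, hx.2⟩)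
  refine ⟨ε, hε, fun x hx => ?_⟩
  rcases eq_or_ne x 0 with rfl | hx0
  · simp
  have hnx : 0 < ‖x‖ := norm_pos_iff.2 hx0
  have hscaled := hεle (‖x‖⁻¹ • x) ⟨C.smul_mem hx (inv_nonneg.2 hnx.le), by simp [norm_smul, hnx.ne']⟩
  rwa [real_inner_smul_right, inv_mul_eq_div, le_div_iff₀ hnx] at hscaled

theorem isBounded_setOf_inner_le [FiniteDimensional ℝ V] (C : ProperCone ℝ V) {u : V}
    (hu : ∀ x ∈ C, x ≠ 0 → 0 < ⟪u, x⟫) (c : ℝ) :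
    Bornology.IsBounded {x | x ∈ C ∧ ⟪u, x⟫ ≤ c} := by
  obtain ⟨ε, hε, hεle⟩ := C.exists_pos_mul_norm_le_inner hu
  refine (Metric.isBounded_closedBall (x := (0 : V)) (r := c / ε)).subset fun x ⟨hxC, hxc⟩ => ?_
  rw [Metric.mem_closedBall, dist_zero_right, le_div_iff₀ hε, mul_comm]
  exact (hεle x hxC).trans hxc

theorem inner_sum_pos_of_mem_innerDual_range [CompleteSpace V] {ι : Type*} [Fintype ι]
    {g : ι → V} (hsalient : ∀ x ∈ innerDual (Set.range g), -x ∈ innerDual (Set.range g) → x = 0)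
    {x : V} (hx : x ∈ innerDual (Set.range g)) (hx0 : x ≠ 0) : 0 < ⟪∑ i, g i, x⟫ := by
  have hnonneg : ∀ i, 0 ≤ ⟪g i, x⟫ := fun i => hx (Set.mem_range_self i)
  rw [sum_inner]
  refine (Finset.sum_nonneg fun i _ => hnonneg i).lt_of_ne fun hsum => hx0 (hsalient x hx ?_)
  have hzero := (Finset.sum_eq_zero_iff_of_nonneg fun i _ => hnonneg i).1 hsum.symm
  rintro _ ⟨i, rfl⟩
  change 0 ≤ ⟪g i, -x⟫
  rw [inner_neg_right, hzero i (Finset.mem_univ i), neg_zero]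

end ProperCone

end Cone

theorem vectorSpan_inter_mk'_of_mem_interior {V : Type*} [AddCommGroup V] [TopologicalSpace V]
    [IsTopologicalAddGroup V] [Module ℝ V] [ContinuousSMul ℝ V] {s : Set V} {x₀ : V}
    (hx₀ : x₀ ∈ interior s) (W : Submodule ℝ V) :
    vectorSpan ℝ (s ∩ AffineSubspace.mk' x₀ W) = W := by
  refine le_antisymm ?_ fun w hw => ?_
  · calc vectorSpan ℝ (s ∩ AffineSubspace.mk' x₀ W)
        ≤ vectorSpan ℝ (AffineSubspace.mk' x₀ W : Set V) := vectorSpan_mono ℝ Set.inter_subset_right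
      _ = W := by rw [← AffineSubspace.direction_eq_vectorSpan, AffineSubspace.direction_mk']
  have hnear : ∀ᶠ c : ℝ in 𝓝[≠] 0, x₀ + c • w ∈ s := by
    refine nhdsWithin_le_nhds (Continuous.tendsto (f := fun c : ℝ => x₀ + c • w) (by fun_prop) 0 ?_)
    simpa using mem_interior_iff_mem_nhds.1 hx₀
  obtain ⟨c, hcs, hc0⟩ := (hnear.and self_mem_nhdsWithin).exists
  have hmem : x₀ + c • w ∈ s ∩ AffineSubspace.mk' x₀ W :=
    ⟨hcs, AffineSubspace.mem_mk'.2 (by simpa using W.smul_mem c hw)⟩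
  have hx₀mem : x₀ ∈ s ∩ AffineSubspace.mk' x₀ W :=
    ⟨interior_subset hx₀, AffineSubspace.self_mem_mk' x₀ W⟩
  have hcw := vsub_mem_vectorSpan ℝ hmem hx₀mem
  rw [vsub_eq_sub, add_sub_cancel_left] at hcw
  exact (Submodule.smul_mem_iff _ hc0).1 hcw

theorem cone_slice_compact_polytope_general {n m : ℕ}
    (g : Fin m → EuclideanSpace ℝ (Fin n))
    (P : Set (EuclideanSpace ℝ (Fin n)))
    (hP : P = {x | ∀ i, 0 ≤ ⟪g i, x⟫})
    (hnoline : ∀ v : EuclideanSpace ℝ (Fin n), v ∈ P → -v ∈ P → v = 0)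
    (u : EuclideanSpace ℝ (Fin n)) (hu : u = ∑ i, g i)
    (x₀ : EuclideanSpace ℝ (Fin n)) (hx₀ : x₀ ∈ interior P)
    (E : Set (EuclideanSpace ℝ (Fin n))) (hE : E = {y | ⟪u, y - x₀⟫ = 0}) :
    IsCompact (P ∩ E) ∧ Convex ℝ (P ∩ E) ∧
      Module.finrank ℝ (vectorSpan ℝ (P ∩ E)) = n - 1 := by
  have hPC : P = ProperCone.innerDual (Set.range g) := by ext; simp [hP]
  have hEA : E = AffineSubspace.mk' x₀ (ℝ ∙ u)ᗮ := by
    ext; simp [hE, Submodule.mem_orthogonal_singleton_iff_inner_right]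
  subst hPC hEA hu
  have hupos : ∀ x ∈ ProperCone.innerDual (Set.range g), x ≠ 0 → 0 < ⟪∑ i, g i, x⟫ :=
    fun _ => ProperCone.inner_sum_pos_of_mem_innerDual_range hnoline
  refine ⟨?_, ProperCone.convex _ |>.inter (AffineSubspace.convex _), ?_⟩
  · refine Metric.isCompact_of_isClosed_isBounded
      ((ProperCone.isClosed _).inter ((AffineSubspace.isClosed_direction_iff _).1
        (Submodule.closed_of_finiteDimensional _)))
      ((ProperCone.isBounded_setOf_inner_le _ hupos ⟪∑ i, g i, x₀⟫).subset ?_)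
    rintro y ⟨hyC, hyA⟩
    have hyu := Submodule.mem_orthogonal_singleton_iff_inner_right.1 (AffineSubspace.mem_mk'.1 hyA)
    rw [vsub_eq_sub, inner_sub_right, sub_eq_zero] at hyu
    exact ⟨hyC, hyu.le⟩
  · rw [vectorSpan_inter_mk'_of_mem_interior hx₀]
    obtain _ | k := n
    · simpa using Submodule.finrank_le (ℝ ∙ ∑ i, g i)ᗮ
    have hsum0 : ∑ i, g i ≠ 0 := by
      intro h0
      have hC0 : (ProperCone.innerDual (Set.range g) : Set (EuclideanSpace ℝ (Fin (k + 1)))) ⊆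
          {0} := fun x hx => by_contra fun hx0 => (hupos x hx hx0).ne' (by simp [h0])
      simpa using interior_mono hC0 hx₀
    have : Fact (Module.finrank ℝ (EuclideanSpace ℝ (Fin (k + 1))) = k + 1) :=
      ⟨finrank_euclideanSpace_fin⟩
    simpa using Submodule.finrank_orthogonal_span_singleton hsum0

/-- For a polyhedral cone `P = {x : fᵢ(x) ≥ 0}` with linear `fᵢ`, no line and nonempty
interior, with `u = Σᵢ ∇fᵢ` and `x₀ ∈ int P`, the slice `P ∩ (x₀ + u^⊥)` is a compact convex
polytope of dimension `n − 1`. -/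
theorem cone_slice_compact_polytope {n m : ℕ}
    (g : Fin m → EuclideanSpace ℝ (Fin n))
    (P : Set (EuclideanSpace ℝ (Fin n)))
    (hP : P = {x | ∀ i, 0 ≤ ⟪g i, x⟫})
    (hnoline : ∀ v : EuclideanSpace ℝ (Fin n), v ∈ P → -v ∈ P → v = 0)
    (hPint : (interior P).Nonempty)
    (u : EuclideanSpace ℝ (Fin n)) (hu : u = ∑ i, g i)
    (x₀ : EuclideanSpace ℝ (Fin n)) (hx₀ : x₀ ∈ interior P)
    (E : Set (EuclideanSpace ℝ (Fin n))) (hE : E = {y | ⟪u, y - x₀⟫ = 0}) :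
    IsCompact (P ∩ E) ∧ Convex ℝ (P ∩ E) ∧
      Module.finrank ℝ (vectorSpan ℝ (P ∩ E)) = n - 1 :=
  cone_slice_compact_polytope_general g P hP hnoline u hu x₀ hx₀ E hE
end

section
/- The Hilbert metric on the interior of any compact convex polytope P ⊂ ℝⁿ with nonempty interior is bilipschitz equivalent to an n-dimensional normed vector space: the map Φ(x) = Σ_{i=1}^m log(f_i(x)) df_i from (int P, d) to the dual space V* (with any norm) is a bilipschitz diffeomorphism onto V*. -/
open Set

set_option linter.unusedSectionVars false
set_option maxHeartbeats 1000000

section Aux0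


variable {V : Type*} [NormedAddCommGroup V] [NormedSpace ℝ V] [FiniteDimensional ℝ V]
variable {m : ℕ}

/-- The open "strict positivity" set. -/
def Qs (f : Fin m → (V →ᵃ[ℝ] ℝ)) : Set V := {x | ∀ i, (f i).linear ≠ 0 → 0 < f i x}

lemma affine_cont (g : V →ᵃ[ℝ] ℝ) : Continuous g := by
  rw [g.decomp]
  exact (g.linear.continuous_of_finiteDimensional).add continuous_const

lemma affine_apply_sub (g : V →ᵃ[ℝ] ℝ) (x y : V) : g x - g y = g.linear (x - y) := by
  simpa using (g.linearMap_vsub x y).symm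

lemma isOpen_Qs (f : Fin m → (V →ᵃ[ℝ] ℝ)) : IsOpen (Qs f) := by
  have : Qs f = ⋂ i, {x | (f i).linear ≠ 0 → 0 < f i x} := by
    ext x; simp [Qs, Set.mem_iInter]
  rw [this]
  refine isOpen_iInter_of_finite fun i => ?_
  by_cases h : (f i).linear = 0
  · simp [h]
  · have : {x | (f i).linear ≠ 0 → 0 < f i x} = (f i) ⁻¹' (Ioi 0) := by
      ext x; simp [h]
    rw [this]
    exact (isOpen_Ioi).preimage (affine_cont _)

lemma isClosed_P (f : Fin m → (V →ᵃ[ℝ] ℝ)) : IsClosed {x : V | ∀ i, 0 ≤ f i x} := by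
  have : {x : V | ∀ i, 0 ≤ f i x} = ⋂ i, (f i) ⁻¹' (Ici 0) := by
    ext x; simp [Set.mem_iInter]
  rw [this]
  exact isClosed_iInter fun i => (isClosed_Ici).preimage (affine_cont _)
end Aux0

section Aux1
variable {V : Type*} [NormedAddCommGroup V] [NormedSpace ℝ V] [FiniteDimensional ℝ V]
variable {m : ℕ}




lemma Qs_subset_P (f : Fin m → (V →ᵃ[ℝ] ℝ)) {z : V} (hz : ∀ i, 0 ≤ f i z) :
    Qs f ⊆ {x : V | ∀ i, 0 ≤ f i x} := by
  intro x hx i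
  by_cases h : (f i).linear = 0
  · have : f i x - f i z = 0 := by rw [affine_apply_sub, h]; simp
    have := hz i; linarith
  · exact (hx i h).le

lemma interior_subset_Qs (f : Fin m → (V →ᵃ[ℝ] ℝ)) (P : Set V) (hP : P = {x | ∀ i, 0 ≤ f i x}) :
    interior P ⊆ Qs f := by
  intro x hx i hi
  obtain ⟨ε, hε, hball⟩ := Metric.mem_nhds_iff.1 (mem_interior_iff_mem_nhds.1 hx)
  -- pick w with (f i).linear w = 1
  obtain ⟨v, hv⟩ : ∃ v, (f i).linear v ≠ 0 := by
    by_contra h; push_neg at h; exact hi (LinearMap.ext fun v => by simpa using h v)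
  set w : V := (((f i).linear v)⁻¹) • v with hw
  have hlw : (f i).linear w = 1 := by
    rw [hw, map_smul, smul_eq_mul, inv_mul_cancel₀ hv]
  have hwne : w ≠ 0 := by
    intro h; rw [h] at hlw; simp at hlw
  set t : ℝ := ε / (2 * ‖w‖) with ht
  have hwpos : 0 < ‖w‖ := norm_pos_iff.2 hwne
  have htpos : 0 < t := by positivity
  have hmem : x - t • w ∈ P := by
    apply hball
    simp only [Metric.mem_ball, dist_eq_norm]
    have : x - t • w - x = -(t • w) := by abel
    rw [this, norm_neg, norm_smul, Real.norm_eq_abs, abs_of_pos htpos, ht]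
    rw [div_mul_eq_mul_div, div_lt_iff₀ (by positivity)]
    nlinarith [hwpos, hε]
  have h0 : 0 ≤ f i (x - t • w) := by rw [hP] at hmem; exact hmem i
  have : f i (x - t • w) = f i x - t := by
    have := affine_apply_sub (f i) (x - t • w) x
    have h2 : (x - t • w) - x = -(t • w) := by abel
    rw [h2] at this
    have : f i (x - t • w) - f i x = -t := by rw [this]; simp [hlw]
    linarith [this]
  rw [this] at h0
  have hge : 0 ≤ f i x := by
    have := interior_subset hx; rw [hP] at this; exact this i
  linarith

lemma interior_P_eq (f : Fin m → (V →ᵃ[ℝ] ℝ)) (P : Set V) (hP : P = {x | ∀ i, 0 ≤ f i x})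
    (hne : P.Nonempty) : interior P = Qs f := by
  apply Subset.antisymm (interior_subset_Qs f P hP)
  have : Qs f ⊆ P := by
    obtain ⟨z, hz⟩ := hne; rw [hP] at hz ⊢; exact Qs_subset_P f hz
  exact (isOpen_Qs f).subset_interior_iff.2 this

lemma frontier_P (f : Fin m → (V →ᵃ[ℝ] ℝ)) (P : Set V) (hP : P = {x | ∀ i, 0 ≤ f i x})
    (hne : P.Nonempty) {a : V} (ha : a ∈ frontier P) :
    a ∈ P ∧ ∃ j, (f j).linear ≠ 0 ∧ f j a = 0 := by
  have hcl : IsClosed P := by rw [hP]; exact isClosed_P f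
  have haP : a ∈ P := by
    have := ha.1; rwa [hcl.closure_eq] at this
  refine ⟨haP, ?_⟩
  have hni : a ∉ interior P := ha.2
  rw [interior_P_eq f P hP hne] at hni
  simp only [Qs, mem_setOf_eq, not_forall] at hni
  obtain ⟨j, hj, hnpos⟩ := hni
  refine ⟨j, hj, le_antisymm (not_lt.1 hnpos) ?_⟩
  rw [hP] at haP; exact haP j
end Aux1

section Aux2
variable {V : Type*} [NormedAddCommGroup V] [NormedSpace ℝ V] [FiniteDimensional ℝ V]
variable {m : ℕ}

lemma push_interior {P : Set V} {z v : V} (hz : z ∈ interior P) (hv : v ≠ 0) :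
    ∃ δ : ℝ, 0 < δ ∧ z + δ • v ∈ P ∧ z - δ • v ∈ P := by
  obtain ⟨ε, hε, hball⟩ := Metric.mem_nhds_iff.1 (mem_interior_iff_mem_nhds.1 hz)
  have hvpos : 0 < ‖v‖ := norm_pos_iff.2 hv
  refine ⟨ε / (2 * ‖v‖), by positivity, ?_, ?_⟩ <;>
  · apply hball
    simp only [Metric.mem_ball, dist_eq_norm]
    have h1 : z + (ε / (2 * ‖v‖)) • v - z = (ε / (2 * ‖v‖)) • v := by abel
    have h2 : z - (ε / (2 * ‖v‖)) • v - z = -((ε / (2 * ‖v‖)) • v) := by abel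
    first
    | rw [h1] | rw [h2, norm_neg]
    all_goals
      rw [norm_smul, Real.norm_eq_abs, abs_of_pos (by positivity)]
      rw [div_mul_eq_mul_div, div_lt_iff₀ (by positivity)]
      nlinarith

lemma exists_exit (f : Fin m → (V →ᵃ[ℝ] ℝ)) (P : Set V) (hP : P = {x | ∀ i, 0 ≤ f i x})
    (hPcomp : IsCompact P) {x y : V} (hx : x ∈ interior P) (hy : y ∈ interior P)
    (hxy : x ≠ y) :
    ∃ t1 t2 : ℝ, t1 < 0 ∧ 1 < t2 ∧
      x + t1 • (y - x) ∈ frontier P ∧ x + t2 • (y - x) ∈ frontier P := by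
  have hcl : IsClosed P := by rw [hP]; exact isClosed_P f
  set v : V := y - x with hvdef
  have hv : v ≠ 0 := sub_ne_zero.2 (Ne.symm hxy)
  have hvpos : 0 < ‖v‖ := norm_pos_iff.2 hv
  set S : Set ℝ := {t : ℝ | x + t • v ∈ P} with hS
  have hcont : Continuous fun t : ℝ => x + t • v := by continuity
  have hSc : IsClosed S := hcl.preimage hcont
  obtain ⟨R, hR⟩ := hPcomp.isBounded.exists_norm_le
  have hbd : ∀ t ∈ S, |t| ≤ (R + ‖x‖) / ‖v‖ := by
    intro t ht
    rw [le_div_iff₀ hvpos]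
    have h1 : ‖t • v‖ ≤ ‖x + t • v‖ + ‖x‖ := by
      have he : ‖t • v‖ = ‖(x + t • v) - x‖ := by congr 1; abel
      rw [he]; exact norm_sub_le _ _
    have := hR _ ht
    rw [norm_smul, Real.norm_eq_abs] at h1
    linarith
  have hSa : BddAbove S := ⟨(R + ‖x‖) / ‖v‖, fun t ht => (le_abs_self t).trans (hbd t ht)⟩
  have hSb : BddBelow S := ⟨-((R + ‖x‖) / ‖v‖), fun t ht => by
    have := hbd t ht; have := neg_abs_le t; linarith⟩
  have h1S : (1 : ℝ) ∈ S := by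
    simp only [hS, mem_setOf_eq, one_smul, hvdef]
    have : x + (y - x) = y := by abel
    rw [this]; exact interior_subset hy
  have h0S : (0 : ℝ) ∈ S := by
    simp only [hS, mem_setOf_eq, zero_smul, add_zero]; exact interior_subset hx
  have hSne : S.Nonempty := ⟨1, h1S⟩
  set t2 : ℝ := sSup S with ht2
  set t1 : ℝ := sInf S with ht1
  have ht2S : t2 ∈ S := hSc.csSup_mem hSne hSa
  have ht1S : t1 ∈ S := hSc.csInf_mem hSne hSb
  have hfr : ∀ t ∈ S, x + t • v ∉ interior P → x + t • v ∈ frontier P := by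
    intro t ht hni
    rw [frontier, hcl.closure_eq]; exact ⟨ht, hni⟩
  have hup : ∀ t ∈ S, x + t • v ∈ interior P → ∃ δ : ℝ, 0 < δ ∧ t + δ ∈ S ∧ t - δ ∈ S := by
    intro t _ hti
    obtain ⟨δ, hδ, hp, hm⟩ := push_interior hti hv
    refine ⟨δ, hδ, ?_, ?_⟩
    · simp only [hS, mem_setOf_eq, add_smul]
      have : x + (t • v + δ • v) = x + t • v + δ • v := by abel
      rw [this]; exact hp
    · simp only [hS, mem_setOf_eq, sub_smul]
      have : x + (t • v - δ • v) = x + t • v - δ • v := by abel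
      rw [this]; exact hm
  have ht2f : x + t2 • v ∈ frontier P := by
    apply hfr t2 ht2S
    intro hi
    obtain ⟨δ, hδ, hp, -⟩ := hup t2 ht2S hi
    have := le_csSup hSa hp; linarith
  have ht1f : x + t1 • v ∈ frontier P := by
    apply hfr t1 ht1S
    intro hi
    obtain ⟨δ, hδ, -, hm⟩ := hup t1 ht1S hi
    have := csInf_le hSb hm; linarith
  have h1lt : 1 < t2 := by
    obtain ⟨δ, hδ, hp, -⟩ := hup 1 h1S (by
      simpa only [one_smul, hvdef, add_sub_cancel] using hy)
    have := le_csSup hSa hp; linarith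
  have h0gt : t1 < 0 := by
    obtain ⟨δ, hδ, -, hm⟩ := hup 0 h0S (by simpa using hx)
    have := csInf_le hSb hm
    simp only [zero_sub] at this; linarith
  exact ⟨t1, t2, h0gt, h1lt, ht1f, ht2f⟩


end Aux2

section Aux3
variable {V : Type*} [NormedAddCommGroup V] [NormedSpace ℝ V] [FiniteDimensional ℝ V]
variable {m : ℕ}

lemma d_formula (f : Fin m → (V →ᵃ[ℝ] ℝ)) (P : Set V) (hP : P = {x | ∀ i, 0 ≤ f i x})
    (hPcomp : IsCompact P) (d : V → V → ℝ)
    (hd : ∀ x y, x ∈ interior P → y ∈ interior P → x ≠ y →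
      ∀ a1 a2 : V, a1 ∈ frontier P → a2 ∈ frontier P →
      (∃ t1 t2 : ℝ, t1 < 0 ∧ 1 < t2 ∧ a1 = x + t1 • (y - x) ∧ a2 = x + t2 • (y - x)) →
      d x y = (1/2) * |Real.log ((‖y - a1‖ / ‖x - a1‖) * (‖x - a2‖ / ‖y - a2‖))|)
    {x y : V} (hx : x ∈ interior P) (hy : y ∈ interior P) (hxy : x ≠ y) :
    ∃ t1 t2 : ℝ, t1 < 0 ∧ 1 < t2 ∧
      x + t1 • (y - x) ∈ frontier P ∧ x + t2 • (y - x) ∈ frontier P ∧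
      d x y = (1/2) * Real.log (((1 - t1) / (-t1)) * (t2 / (t2 - 1))) := by
  obtain ⟨t1, t2, ht1, ht2, hf1, hf2⟩ := exists_exit f P hP hPcomp hx hy hxy
  refine ⟨t1, t2, ht1, ht2, hf1, hf2, ?_⟩
  have hdxy := hd x y hx hy hxy _ _ hf1 hf2 ⟨t1, t2, ht1, ht2, rfl, rfl⟩
  set v : V := y - x with hv
  have hvne : v ≠ 0 := sub_ne_zero.2 (Ne.symm hxy)
  have hvpos : 0 < ‖v‖ := norm_pos_iff.2 hvne
  have e1 : y - (x + t1 • v) = (1 - t1) • v := by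
    rw [sub_smul, one_smul]; rw [hv]; abel
  have e2 : x - (x + t1 • v) = -(t1 • v) := by abel
  have e3 : x - (x + t2 • v) = -(t2 • v) := by abel
  have e4 : y - (x + t2 • v) = (1 - t2) • v := by
    rw [sub_smul, one_smul]; rw [hv]; abel
  rw [e1, e2, e3, e4] at hdxy
  rw [norm_smul, norm_neg, norm_smul, norm_neg, norm_smul, norm_smul] at hdxy
  simp only [Real.norm_eq_abs] at hdxy
  have h1t1 : (0:ℝ) < 1 - t1 := by linarith
  have ht2p : (0:ℝ) < t2 := by linarith
  have h1t2 : (1 - t2 : ℝ) < 0 := by linarith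
  rw [abs_of_pos h1t1, abs_of_neg ht1, abs_of_pos ht2p, abs_of_neg h1t2] at hdxy
  rw [mul_div_mul_right _ _ (ne_of_gt hvpos), mul_div_mul_right _ _ (ne_of_gt hvpos)] at hdxy
  have harg : (1:ℝ) ≤ (1 - t1) / -t1 * (t2 / -(1 - t2)) := by
    have hr1 : (1:ℝ) ≤ (1 - t1) / -t1 := by
      rw [le_div_iff₀ (by linarith)]; linarith
    have hr2 : (1:ℝ) ≤ t2 / -(1 - t2) := by
      rw [le_div_iff₀ (by linarith)]; linarith
    nlinarith
  rw [abs_of_nonneg (Real.log_nonneg harg)] at hdxy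
  rw [hdxy]
  congr 2
  ring
end Aux3

section Aux4
variable {V : Type*} [NormedAddCommGroup V] [NormedSpace ℝ V] [FiniteDimensional ℝ V]
variable {m : ℕ}

section Main
variable (f : Fin m → (V →ᵃ[ℝ] ℝ)) (P : Set V) (hP : P = {x | ∀ i, 0 ≤ f i x})
    (hPcomp : IsCompact P) (d : V → V → ℝ)
    (hd : ∀ x y, x ∈ interior P → y ∈ interior P → x ≠ y →
      ∀ a1 a2 : V, a1 ∈ frontier P → a2 ∈ frontier P →
      (∃ t1 t2 : ℝ, t1 < 0 ∧ 1 < t2 ∧ a1 = x + t1 • (y - x) ∧ a2 = x + t2 • (y - x)) →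
      d x y = (1/2) * |Real.log ((‖y - a1‖ / ‖x - a1‖) * (‖x - a2‖ / ‖y - a2‖))|)

-- evaluation of f i along the line
lemma line_eval (i : Fin m) (x y : V) (t : ℝ) :
    f i (x + t • (y - x)) = f i x + t * (f i y - f i x) := by
  have h1 := affine_apply_sub (f i) (x + t • (y - x)) x
  have h2 : x + t • (y - x) - x = t • (y - x) := by abel
  rw [h2, map_smul] at h1
  have h3 : (f i).linear (y - x) = f i y - f i x := (affine_apply_sub (f i) y x).symm
  rw [h3] at h1
  simp only [smul_eq_mul] at h1
  linarith

include hP hPcomp hd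

lemma d_nonneg {x y : V} (hx : x ∈ interior P) (hy : y ∈ interior P) (hxy : x ≠ y) :
    0 ≤ d x y ∧ ∃ t1 t2 : ℝ, t1 < 0 ∧ 1 < t2 ∧
      x + t1 • (y - x) ∈ frontier P ∧ x + t2 • (y - x) ∈ frontier P ∧
      d x y = (1/2) * Real.log (((1 - t1) / (-t1)) * (t2 / (t2 - 1))) := by
  obtain ⟨t1, t2, ht1, ht2, hf1, hf2, hdf⟩ := d_formula f P hP hPcomp d hd hx hy hxy
  have harg : (1:ℝ) ≤ (1 - t1) / -t1 * (t2 / (t2 - 1)) := by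
    have hr1 : (1:ℝ) ≤ (1 - t1) / -t1 := by rw [le_div_iff₀ (by linarith)]; linarith
    have hr2 : (1:ℝ) ≤ t2 / (t2 - 1) := by rw [le_div_iff₀ (by linarith)]; linarith
    nlinarith
  constructor
  · rw [hdf]
    exact mul_nonneg (by norm_num) (Real.log_nonneg harg)
  · exact ⟨t1, t2, ht1, ht2, hf1, hf2, hdf⟩

lemma log_ratio_le (hne : (interior P).Nonempty) {x y : V} (hx : x ∈ interior P)
    (hy : y ∈ interior P) (hxy : x ≠ y) (i : Fin m) :
    |Real.log (f i x) - Real.log (f i y)| ≤ 2 * d x y := by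
  have hPne : P.Nonempty := hne.mono interior_subset
  obtain ⟨hd0, t1, t2, ht1, ht2, hfr1, hfr2, hdf⟩ := d_nonneg f P hP hPcomp d hd hx hy hxy
  by_cases hlin : (f i).linear = 0
  · have : f i x - f i y = 0 := by rw [affine_apply_sub, hlin]; simp
    have heq : f i x = f i y := by linarith
    rw [heq]; simp; linarith
  · have hxQ := (interior_P_eq f P hP hPne) ▸ hx
    have hyQ := (interior_P_eq f P hP hPne) ▸ hy
    have ha : 0 < f i x := hxQ i hlin
    have hb : 0 < f i y := hyQ i hlin
    set a := f i x
    set b := f i y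
    have hP1 : 0 ≤ a + t1 * (b - a) := by
      have := (frontier_P f P hP hPne hfr1).1
      rw [hP] at this
      have := this i
      rwa [line_eval f i x y t1] at this
    have hP2 : 0 ≤ a + t2 * (b - a) := by
      have := (frontier_P f P hP hPne hfr2).1
      rw [hP] at this
      have := this i
      rwa [line_eval f i x y t2] at this
    have hr1 : (1:ℝ) ≤ (1 - t1) / -t1 := by rw [le_div_iff₀ (by linarith)]; linarith
    have hr2 : (1:ℝ) ≤ t2 / (t2 - 1) := by rw [le_div_iff₀ (by linarith)]; linarith
    have h2d : 2 * d x y = Real.log ((1 - t1) / -t1 * (t2 / (t2 - 1))) := by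
      rw [hdf]; ring
    rw [h2d]
    rcases le_total a b with hab | hab
    · -- b ≥ a, |log a - log b| = log (b/a) ≤ log ((1-t1)/(-t1))
      rw [abs_sub_comm, abs_of_nonneg (by
        have := Real.log_le_log ha hab; linarith)]
      rw [← Real.log_div (ne_of_gt hb) (ne_of_gt ha)]
      apply Real.log_le_log (by positivity)
      have hba : b / a ≤ (1 - t1) / -t1 := by
        rw [div_le_div_iff₀ ha (by linarith)]
        nlinarith
      calc b / a ≤ (1 - t1) / -t1 := hba
        _ = (1 - t1) / -t1 * 1 := by ring
        _ ≤ (1 - t1) / -t1 * (t2 / (t2 - 1)) := by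
            apply mul_le_mul_of_nonneg_left hr2; linarith
    · rw [abs_of_nonneg (by
        have := Real.log_le_log hb hab; linarith)]
      rw [← Real.log_div (ne_of_gt ha) (ne_of_gt hb)]
      apply Real.log_le_log (by positivity)
      have hab2 : a / b ≤ t2 / (t2 - 1) := by
        rw [div_le_div_iff₀ hb (by linarith)]
        nlinarith
      calc a / b ≤ t2 / (t2 - 1) := hab2
        _ = 1 * (t2 / (t2 - 1)) := by ring
        _ ≤ (1 - t1) / -t1 * (t2 / (t2 - 1)) := by
            apply mul_le_mul_of_nonneg_right hr1; linarith

lemma d_le_log (hne : (interior P).Nonempty) {x y : V} (hx : x ∈ interior P)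
    (hy : y ∈ interior P) (hxy : x ≠ y) :
    ∃ i, (f i).linear ≠ 0 ∧ d x y ≤ |Real.log (f i x) - Real.log (f i y)| := by
  have hPne : P.Nonempty := hne.mono interior_subset
  obtain ⟨hd0, t1, t2, ht1, ht2, hfr1, hfr2, hdf⟩ := d_nonneg f P hP hPcomp d hd hx hy hxy
  obtain ⟨-, j, hjlin, hja⟩ := frontier_P f P hP hPne hfr1
  obtain ⟨-, k, hklin, hka⟩ := frontier_P f P hP hPne hfr2
  have hxQ := (interior_P_eq f P hP hPne) ▸ hx
  have hyQ := (interior_P_eq f P hP hPne) ▸ hy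
  have haj : 0 < f j x := hxQ j hjlin
  have hbj : 0 < f j y := hyQ j hjlin
  have hak : 0 < f k x := hxQ k hklin
  have hbk : 0 < f k y := hyQ k hklin
  rw [line_eval f j x y t1] at hja
  rw [line_eval f k x y t2] at hka
  -- b_j = a_j * (1 - t1)/(-t1),  b_k = a_k * (t2-1)/t2
  have hbj' : f j y = f j x * ((1 - t1) / -t1) := by
    rw [mul_div_assoc', eq_div_iff (by linarith : (-t1 : ℝ) ≠ 0)]
    linear_combination -hja
  have hbk' : f k y = f k x * ((t2 - 1) / t2) := by
    rw [mul_div_assoc', eq_div_iff (by linarith : (t2 : ℝ) ≠ 0)]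
    linear_combination hka
  set A := Real.log ((1 - t1) / -t1) with hA
  set B := Real.log (t2 / (t2 - 1)) with hB
  have hApos : 0 ≤ A := Real.log_nonneg (by rw [le_div_iff₀ (by linarith)]; linarith)
  have hBpos : 0 ≤ B := Real.log_nonneg (by rw [le_div_iff₀ (by linarith)]; linarith)
  have hdAB : d x y = (1/2) * (A + B) := by
    rw [hdf, ← Real.log_mul (ne_of_gt (div_pos (by linarith) (by linarith)))
      (ne_of_gt (div_pos (by linarith) (by linarith)))]
  have hj2 : |Real.log (f j x) - Real.log (f j y)| = A := by
    rw [hbj', Real.log_mul (ne_of_gt haj) (ne_of_gt (div_pos (by linarith) (by linarith)))]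
    rw [abs_sub_comm]
    have : Real.log (f j x) + A - Real.log (f j x) = A := by ring
    rw [this, abs_of_nonneg hApos]
  have hk2 : |Real.log (f k x) - Real.log (f k y)| = B := by
    rw [hbk', Real.log_mul (ne_of_gt hak) (ne_of_gt (div_pos (by linarith) (by linarith)))]
    have h1 : Real.log (f k x) - (Real.log (f k x) + Real.log ((t2 - 1) / t2)) =
        - Real.log ((t2 - 1) / t2) := by ring
    have h2 : Real.log ((t2 - 1) / t2) = -B := by
      rw [hB, ← Real.log_inv, inv_div]
    rw [h1, h2, neg_neg, abs_of_nonneg hBpos]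
  rcases le_total A B with h | h
  · exact ⟨k, hklin, by rw [hk2]; linarith [hdAB]⟩
  · exact ⟨j, hjlin, by rw [hj2]; linarith [hdAB]⟩
end Main
end Aux4

section Aux5
variable {V : Type*} [NormedAddCommGroup V] [NormedSpace ℝ V] [FiniteDimensional ℝ V]
variable {m : ℕ}

/-- feasibility of a sign pattern -/
def Feas (f : Fin m → (V →ᵃ[ℝ] ℝ)) (σ : Fin m → SignType) (k : Fin m) : Prop :=
  ∃ v : V, ‖v‖ = 1 ∧ (∀ i, 0 ≤ ((σ i : ℝ)) * (f i).linear v) ∧ 0 < (f k).linear v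

open Classical in
noncomputable def patEps (f : Fin m → (V →ᵃ[ℝ] ℝ)) (σ : Fin m → SignType) (k : Fin m) : ℝ :=
  if h : Feas f σ k then (f k).linear h.choose else 1

lemma patEps_pos (f : Fin m → (V →ᵃ[ℝ] ℝ)) (σ : Fin m → SignType) (k : Fin m) :
    0 < patEps f σ k := by
  unfold patEps
  split_ifs with h
  · exact h.choose_spec.2.2
  · norm_num

lemma eps_lower (f : Fin m → (V →ᵃ[ℝ] ℝ)) (hm : Nonempty (Fin m)) :
    ∃ ε : ℝ, 0 < ε ∧ ∀ x y : V,
      (∀ i, (f i).linear ≠ 0 → 0 < f i x) → (∀ i, (f i).linear ≠ 0 → 0 < f i y) →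
      ∀ i : Fin m,
      ε * |Real.log (f i x) - Real.log (f i y)| ≤
        ‖∑ j, (Real.log (f j x) - Real.log (f j y)) • (f j).linear.toContinuousLinearMap‖ := by
  have hne : (Finset.univ : Finset ((Fin m → SignType) × Fin m)).Nonempty :=
    Finset.univ_nonempty
  set ε : ℝ := Finset.univ.inf' hne (fun p : (Fin m → SignType) × Fin m => patEps f p.1 p.2)
    with hε
  have hεpos : 0 < ε := by
    rw [hε, Finset.lt_inf'_iff]
    exact fun p _ => patEps_pos f p.1 p.2
  refine ⟨ε, hεpos, ?_⟩
  -- one-sided version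
  have key : ∀ x y : V,
      (∀ i, (f i).linear ≠ 0 → 0 < f i x) → (∀ i, (f i).linear ≠ 0 → 0 < f i y) →
      ∀ i : Fin m, 0 < Real.log (f i x) - Real.log (f i y) →
      ε * (Real.log (f i x) - Real.log (f i y)) ≤
        ‖∑ j, (Real.log (f j x) - Real.log (f j y)) • (f j).linear.toContinuousLinearMap‖ := by
    intro x y hx hy i hui
    set u : Fin m → ℝ := fun j => Real.log (f j x) - Real.log (f j y) with hu
    -- sign relation : for every j, u j and (f j x - f j y) have the same sign
    have hsign : ∀ j, (0 < u j → 0 < f j x - f j y) ∧ (u j < 0 → f j x - f j y < 0) ∧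
        (u j = 0 → f j x - f j y = 0) := by
      intro j
      by_cases hlin : (f j).linear = 0
      · have h0 : f j x - f j y = 0 := by rw [affine_apply_sub, hlin]; simp
        have hu0 : u j = 0 := by
          have : f j x = f j y := by linarith
          simp [hu, this]
        constructor
        · intro h; rw [hu0] at h; linarith
        constructor
        · intro h; rw [hu0] at h; linarith
        · intro _; exact h0
      · have hax : 0 < f j x := hx j hlin
        have hay : 0 < f j y := hy j hlin
        constructor
        · intro h
          have : Real.log (f j y) < Real.log (f j x) := by simp only [hu] at h; linarith
          have := (Real.log_lt_log_iff hay hax).1 this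
          linarith
        constructor
        · intro h
          have : Real.log (f j x) < Real.log (f j y) := by simp only [hu] at h; linarith
          have := (Real.log_lt_log_iff hax hay).1 this
          linarith
        · intro h
          have : Real.log (f j x) = Real.log (f j y) := by simp only [hu] at h; linarith
          have := Real.log_injOn_pos (mem_Ioi.2 hax) (mem_Ioi.2 hay) this
          linarith
    have hxyne : x ≠ y := by
      intro h
      rw [h] at hui; simp at hui
    set σ : Fin m → SignType := fun j => SignType.sign (u j) with hσ
    have hσj : ∀ j, σ j = SignType.sign (u j) := fun j => rfl
    have hfeas : Feas f σ i := by
      refine ⟨‖x - y‖⁻¹ • (x - y), ?_, ?_, ?_⟩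
      · rw [norm_smul, norm_inv, norm_norm, inv_mul_cancel₀ (by
          simpa [sub_eq_zero] using hxyne)]
      · intro j
        have hlv : (f j).linear (‖x - y‖⁻¹ • (x - y)) = ‖x - y‖⁻¹ * (f j x - f j y) := by
          rw [map_smul, smul_eq_mul, ← affine_apply_sub]
        rw [hlv, hσj j]
        have hinv : 0 ≤ ‖x - y‖⁻¹ := by positivity
        rcases lt_trichotomy (u j) 0 with h | h | h
        · rw [sign_neg h]
          have := (hsign j).2.1 h
          simp only [SignType.coe_neg_one]
          nlinarith
        · rw [h, sign_zero]
          simp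
        · rw [sign_pos h]
          have := (hsign j).1 h
          simp only [SignType.coe_one, one_mul]
          positivity
      · have hlv : (f i).linear (‖x - y‖⁻¹ • (x - y)) = ‖x - y‖⁻¹ * (f i x - f i y) := by
          rw [map_smul, smul_eq_mul, ← affine_apply_sub]
        rw [hlv]
        have h1 := (hsign i).1 hui
        have hinv : 0 < ‖x - y‖⁻¹ := by
          have h2 : x - y ≠ 0 := by simpa [sub_eq_zero] using hxyne
          exact inv_pos.2 (norm_pos_iff.2 h2)
        exact mul_pos hinv h1
    set v : V := hfeas.choose with hv
    obtain ⟨hv1, hv2, hv3⟩ := hfeas.choose_spec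
    have hgp : patEps f σ i = (f i).linear v := by
      rw [patEps, dif_pos hfeas]
    have hεle : ε ≤ patEps f σ i :=
      Finset.inf'_le _ (Finset.mem_univ (⟨σ, i⟩ : (Fin m → SignType) × Fin m))
    -- evaluate the sum at v
    set A : V →L[ℝ] ℝ := ∑ j, (u j) • (f j).linear.toContinuousLinearMap with hA
    have hAv : A v = ∑ j, u j * (f j).linear v := by
      rw [hA, ContinuousLinearMap.sum_apply]
      refine Finset.sum_congr rfl fun j _ => ?_
      simp [ContinuousLinearMap.smul_apply, LinearMap.coe_toContinuousLinearMap']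
    have hterm : ∀ j, 0 ≤ u j * (f j).linear v := by
      intro j
      have hs := hv2 j
      rw [hσj j] at hs
      rcases lt_trichotomy (u j) 0 with h | h | h
      · rw [sign_neg h] at hs
        simp only [SignType.coe_neg_one] at hs
        nlinarith
      · simp [h]
      · rw [sign_pos h] at hs
        simp only [SignType.coe_one, one_mul] at hs
        nlinarith
    have hsum : u i * (f i).linear v ≤ A v := by
      rw [hAv]
      exact Finset.single_le_sum (fun j _ => hterm j) (Finset.mem_univ i)
    have hAvlb : ε * u i ≤ A v := by
      have h1 : ε ≤ (f i).linear v := by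
        rw [hgp] at hεle; exact hεle
      have hui' : 0 < u i := hui
      nlinarith [hv3, hεpos, hui', hsum, h1]
    have hnorm : A v ≤ ‖A‖ := by
      have := A.le_opNorm v
      rw [hv1, mul_one] at this
      exact le_trans (le_abs_self _) this
    exact le_trans hAvlb hnorm
  intro x y hx hy i
  rcases lt_trichotomy (Real.log (f i x) - Real.log (f i y)) 0 with h | h | h
  · rw [abs_of_neg h]
    have := key y x hy hx i (by linarith)
    have hswap : ∑ j, (Real.log (f j y) - Real.log (f j x)) • (f j).linear.toContinuousLinearMap
        = -∑ j, (Real.log (f j x) - Real.log (f j y)) • (f j).linear.toContinuousLinearMap := by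
      rw [← Finset.sum_neg_distrib]
      congr 1; ext j
      simp only [ContinuousLinearMap.neg_apply, ContinuousLinearMap.smul_apply, smul_eq_mul]; ring
    rw [hswap, norm_neg] at this
    linarith
  · rw [h]; simp
  · rw [abs_of_pos h]
    exact key x y hx hy i h
end Aux5

section Aux6

noncomputable def phiR (t : ℝ) : ℝ := t * Real.log t - t

lemma phiR_zero : phiR 0 = 0 := by simp [phiR]

lemma phiR_convex_ineq {c q : ℝ} (hc : 0 < c) (hq : 0 < q) :
    phiR q - phiR c ≤ (q - c) * Real.log q := by
  have h1 : Real.log (q / c) ≤ q / c - 1 := Real.log_le_sub_one_of_pos (by positivity)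
  rw [Real.log_div (ne_of_gt hq) (ne_of_gt hc)] at h1
  have h2 : c * (Real.log q - Real.log c) ≤ q - c := by
    have := mul_le_mul_of_nonneg_left h1 hc.le
    calc c * (Real.log q - Real.log c) = c * (Real.log q - Real.log c) := rfl
      _ ≤ c * (q / c - 1) := this
      _ = q - c := by field_simp
  simp only [phiR]
  nlinarith

lemma phiR_bound_pos (c Δ : ℝ) (hc : 0 < c) :
    ∃ K t0 : ℝ, 0 < t0 ∧ t0 ≤ 1 ∧ 0 ≤ K ∧
      ∀ t : ℝ, 0 < t → t ≤ t0 → phiR (c + t * Δ) - phiR c ≤ t * K := by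
  refine ⟨|Δ| * (|Real.log (c/2)| + |Real.log (c + |Δ|)|),
    min 1 (c / (2 * (|Δ| + 1))), by positivity, min_le_left _ _, by positivity, ?_⟩
  intro t ht ht0
  have htle1 : t ≤ 1 := le_trans ht0 (min_le_left _ _)
  have htle2 : t ≤ c / (2 * (|Δ| + 1)) := le_trans ht0 (min_le_right _ _)
  have habs : t * |Δ| ≤ c / 2 := by
    have h1 : t * (|Δ| + 1) ≤ c / 2 := by
      rw [le_div_iff₀ (by positivity : (0:ℝ) < 2)]
      rw [le_div_iff₀ (by positivity : (0:ℝ) < 2 * (|Δ| + 1))] at htle2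
      nlinarith [abs_nonneg Δ]
    nlinarith [abs_nonneg Δ, ht]
  set q : ℝ := c + t * Δ with hqd
  have hq1 : c / 2 ≤ q := by
    have : -(t * |Δ|) ≤ t * Δ := by
      have := neg_abs_le (t * Δ)
      rwa [abs_mul, abs_of_pos ht] at this
    simp only [hqd]; linarith
  have hq2 : q ≤ c + |Δ| := by
    have : t * Δ ≤ t * |Δ| := mul_le_mul_of_nonneg_left (le_abs_self Δ) ht.le
    have h2 : t * |Δ| ≤ 1 * |Δ| := mul_le_mul_of_nonneg_right htle1 (abs_nonneg Δ)
    simp only [hqd]; linarith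
  have hqpos : 0 < q := lt_of_lt_of_le (by positivity) hq1
  have hlog : |Real.log q| ≤ |Real.log (c/2)| + |Real.log (c + |Δ|)| := by
    have hml : Real.log (c/2) ≤ Real.log q := Real.log_le_log (by positivity) hq1
    have hmr : Real.log q ≤ Real.log (c + |Δ|) := Real.log_le_log hqpos hq2
    have := abs_le_max_abs_abs hml hmr
    calc |Real.log q| ≤ max |Real.log (c/2)| |Real.log (c + |Δ|)| := this
      _ ≤ |Real.log (c/2)| + |Real.log (c + |Δ|)| := by
          apply max_le <;> nlinarith [abs_nonneg (Real.log (c/2)), abs_nonneg (Real.log (c + |Δ|))]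
  calc phiR q - phiR c ≤ (q - c) * Real.log q := phiR_convex_ineq hc hqpos
    _ = t * (Δ * Real.log q) := by rw [hqd]; ring
    _ ≤ t * (|Δ| * (|Real.log (c/2)| + |Real.log (c + |Δ|)|)) := by
        apply mul_le_mul_of_nonneg_left _ ht.le
        calc Δ * Real.log q ≤ |Δ * Real.log q| := le_abs_self _
          _ = |Δ| * |Real.log q| := abs_mul _ _
          _ ≤ |Δ| * (|Real.log (c/2)| + |Real.log (c + |Δ|)|) :=
              mul_le_mul_of_nonneg_left hlog (abs_nonneg Δ)
    _ = t * (|Δ| * (|Real.log (c/2)| + |Real.log (c + |Δ|)|)) := rfl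

lemma phiR_zero_case (Δ t : ℝ) (hΔ : 0 < Δ) (ht : 0 < t) (ht1 : t ≤ 1) :
    phiR (t * Δ) ≤ t * Δ * Real.log t + t * (Δ * |Real.log Δ|) := by
  simp only [phiR]
  rw [Real.log_mul (ne_of_gt ht) (ne_of_gt hΔ)]
  have h1 : Δ * Real.log Δ ≤ Δ * |Real.log Δ| :=
    mul_le_mul_of_nonneg_left (le_abs_self _) hΔ.le
  nlinarith [mul_pos ht hΔ]

variable {V : Type*} [NormedAddCommGroup V] [NormedSpace ℝ V] [FiniteDimensional ℝ V]
variable {m : ℕ}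

lemma surj_lemma (f : Fin m → (V →ᵃ[ℝ] ℝ)) (P : Set V) (hP : P = {x | ∀ i, 0 ≤ f i x})
    (hPcomp : IsCompact P) (hPint : (interior P).Nonempty) (ℓ : V →L[ℝ] ℝ) :
    ∃ x0 ∈ interior P,
      (∑ i, Real.log (f i x0) • (f i).linear.toContinuousLinearMap) = ℓ := by
  classical
  have hPne : P.Nonempty := hPint.mono interior_subset
  set h : V → ℝ := fun x => (∑ i, phiR (f i x)) - ℓ x with hh
  have hcont : ContinuousOn h P := by
    apply ContinuousOn.sub _ ℓ.continuous.continuousOn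
    apply continuousOn_finset_sum
    intro i _
    have : Continuous fun x => phiR (f i x) := by
      have h1 : Continuous fun x => (f i x) * Real.log (f i x) :=
        Real.continuous_mul_log.comp (affine_cont (f i))
      exact h1.sub (affine_cont (f i))
    exact this.continuousOn
  obtain ⟨x0, hx0P, hmin⟩ := hPcomp.exists_isMinOn hPne hcont
  have hQ := interior_P_eq f P hP hPne
  -- x0 is in the interior
  have hx0int : x0 ∈ interior P := by
    by_contra hni
    rw [hQ] at hni
    simp only [Qs, mem_setOf_eq, not_forall] at hni
    obtain ⟨j, hjlin, hjnpos⟩ := hni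
    have hjz : f j x0 = 0 := by
      refine le_antisymm (not_lt.1 hjnpos) ?_
      rw [hP] at hx0P; exact hx0P j
    obtain ⟨z, hz⟩ := hPint
    have hzQ := hQ ▸ hz
    have hΔj : 0 < f j z - f j x0 := by
      rw [hjz, sub_zero]; exact hzQ j hjlin
    -- for each i, get bounds
    have hbounds : ∀ i : Fin m, ∃ K t0 : ℝ, 0 < t0 ∧ t0 ≤ 1 ∧ 0 ≤ K ∧
        ∀ t : ℝ, 0 < t → t ≤ t0 →
          phiR (f i x0 + t * (f i z - f i x0)) - phiR (f i x0) ≤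
            t * K + (if i = j then t * (f j z - f j x0) * Real.log t else 0) := by
      intro i
      have hciP : 0 ≤ f i x0 := by rw [hP] at hx0P; exact hx0P i
      rcases eq_or_lt_of_le hciP with hc0 | hcpos
      · -- f i x0 = 0
        by_cases hlin : (f i).linear = 0
        · -- constant, Δ = 0, and c = 0
          have hΔ0 : f i z - f i x0 = 0 := by
            rw [affine_apply_sub, hlin]; simp
          refine ⟨0, 1, one_pos, le_refl _, le_refl _, ?_⟩
          intro t ht ht1
          rw [hΔ0, mul_zero, add_zero, sub_self]
          split_ifs with hij
          · rw [← hij, hΔ0]; simp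
          · simp
        · -- c = 0, Δ > 0
          have hΔ : 0 < f i z - f i x0 := by
            rw [← hc0, sub_zero] at *
            have := hzQ i hlin
            rw [← hc0] at *
            linarith [hzQ i hlin]
          set Δ : ℝ := f i z - f i x0 with hΔd
          refine ⟨Δ * |Real.log Δ|, 1, one_pos, le_refl _, by positivity, ?_⟩
          intro t ht ht1
          have hkey := phiR_zero_case Δ t hΔ ht ht1
          rw [← hc0, zero_add, phiR_zero, sub_zero]
          split_ifs with hij
          · subst hij
            rw [← hΔd]
            linarith [hkey]
          · have hlogt : Real.log t ≤ 0 := Real.log_nonpos ht.le ht1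
            nlinarith [hkey, mul_pos ht hΔ]
      · -- c > 0
        obtain ⟨K, t0, ht0, ht01, hK, hbd⟩ := phiR_bound_pos (f i x0) (f i z - f i x0) hcpos
        refine ⟨K, t0, ht0, ht01, hK, ?_⟩
        intro t ht htle
        have := hbd t ht htle
        split_ifs with hij
        · have hlogt : Real.log t ≤ 0 := Real.log_nonpos ht.le (le_trans htle ht01)
          subst hij
          nlinarith [mul_pos ht hΔj]
        · linarith
    choose K T h1 h2 h3 h4 using hbounds
    have hmne : Nonempty (Fin m) := ⟨j⟩
    set t0 : ℝ := Finset.univ.inf' Finset.univ_nonempty T with ht0d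
    have ht0pos : 0 < t0 := by
      rw [ht0d, Finset.lt_inf'_iff]; exact fun i _ => h1 i
    have ht0le : ∀ i, t0 ≤ T i := fun i => Finset.inf'_le _ (Finset.mem_univ i)
    have ht0le1 : t0 ≤ 1 := le_trans (ht0le j) (h2 j)
    set Ksum : ℝ := (∑ i, K i) + |ℓ (z - x0)| with hKd
    have hKsum : 0 ≤ Ksum := by
      rw [hKd]
      have : 0 ≤ ∑ i, K i := Finset.sum_nonneg fun i _ => h3 i
      positivity
    set Δj : ℝ := f j z - f j x0 with hΔjd
    set t : ℝ := min t0 (Real.exp (-(Ksum + 1) / Δj)) with htd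
    have htpos : 0 < t := lt_min ht0pos (Real.exp_pos _)
    have htt0 : t ≤ t0 := min_le_left _ _
    have htlog : Δj * Real.log t ≤ -(Ksum + 1) := by
      have hle : Real.log t ≤ -(Ksum + 1) / Δj := by
        have := Real.log_le_log htpos (min_le_right t0 (Real.exp (-(Ksum + 1) / Δj)))
        rwa [Real.log_exp] at this
      have := mul_le_mul_of_nonneg_left hle hΔj.le
      rwa [mul_div_cancel₀ _ (ne_of_gt hΔj)] at this
    -- the point x_t
    set xt : V := x0 + t • (z - x0) with hxtd
    have hxtP : xt ∈ P := by
      rw [hP]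
      intro i
      rw [hxtd, line_eval f i x0 z t]
      have hciP : 0 ≤ f i x0 := by rw [hP] at hx0P; exact hx0P i
      have hziP : 0 ≤ f i z := by
        have := interior_subset hz; rw [hP] at this; exact this i
      have ht1 : t ≤ 1 := le_trans htt0 ht0le1
      nlinarith
    have hsum : h xt - h x0 ≤ t * Ksum + t * Δj * Real.log t := by
      have hterm : ∀ i : Fin m, phiR (f i xt) - phiR (f i x0) ≤
          t * K i + (if i = j then t * Δj * Real.log t else 0) := by
        intro i
        rw [hxtd, line_eval f i x0 z t]
        exact h4 i t htpos (le_trans htt0 (ht0le i))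
      have hs1 : (∑ i, phiR (f i xt)) - (∑ i, phiR (f i x0)) ≤
          (∑ i, (t * K i + (if i = j then t * Δj * Real.log t else 0))) := by
        rw [← Finset.sum_sub_distrib]
        exact Finset.sum_le_sum fun i _ => hterm i
      have hs2 : (∑ i, (t * K i + (if i = j then t * Δj * Real.log t else 0)))
          = t * (∑ i, K i) + t * Δj * Real.log t := by
        rw [Finset.sum_add_distrib, Finset.sum_ite_eq' Finset.univ j
          (fun _ => t * Δj * Real.log t)]
        simp [Finset.mul_sum]
      have hs3 : ℓ x0 - ℓ xt ≤ t * |ℓ (z - x0)| := by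
        have hxt : ℓ xt = ℓ x0 + t * ℓ (z - x0) := by
          rw [hxtd]; simp [map_add, map_smul]
        rw [hxt]
        have h5 : -(ℓ (z - x0)) ≤ |ℓ (z - x0)| := neg_le_abs _
        have h6 := mul_le_mul_of_nonneg_left h5 htpos.le
        linarith [h6]
      have : h xt - h x0 = ((∑ i, phiR (f i xt)) - (∑ i, phiR (f i x0))) + (ℓ x0 - ℓ xt) := by
        rw [hh]; ring
      rw [this]
      calc ((∑ i, phiR (f i xt)) - (∑ i, phiR (f i x0))) + (ℓ x0 - ℓ xt)
          ≤ (t * (∑ i, K i) + t * Δj * Real.log t) + t * |ℓ (z - x0)| := by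
            rw [← hs2]; exact add_le_add hs1 hs3
        _ = t * ((∑ i, K i) + |ℓ (z - x0)|) + t * Δj * Real.log t := by ring
        _ = t * Ksum + t * Δj * Real.log t := by rw [hKd]
    have hneg : h xt - h x0 ≤ -t := by
      have : t * Δj * Real.log t ≤ t * -(Ksum + 1) := by
        rw [mul_assoc]
        exact mul_le_mul_of_nonneg_left htlog htpos.le
      calc h xt - h x0 ≤ t * Ksum + t * Δj * Real.log t := hsum
        _ ≤ t * Ksum + t * -(Ksum + 1) := by linarith
        _ = -t := by ring
    have := hmin hxtP
    simp only [mem_setOf_eq] at this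
    have : h x0 ≤ h xt := this
    linarith [htpos]
  -- now derivative vanishes at x0
  refine ⟨x0, hx0int, ?_⟩
  have hderiv : HasFDerivAt h ((∑ i, Real.log (f i x0) • (f i).linear.toContinuousLinearMap)
      - (ℓ : V →L[ℝ] ℝ)) x0 := by
    apply HasFDerivAt.sub _ ℓ.hasFDerivAt
    apply HasFDerivAt.fun_sum
    intro i _
    by_cases hlin : (f i).linear = 0
    · have hconst : (fun x => phiR (f i x)) = fun _ => phiR (f i x0) := by
        funext x
        have : f i x - f i x0 = 0 := by rw [affine_apply_sub, hlin]; simp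
        have : f i x = f i x0 := by linarith
        rw [this]
      rw [hconst]
      have : Real.log (f i x0) • (f i).linear.toContinuousLinearMap = 0 := by
        rw [hlin]; simp
      rw [this]
      exact hasFDerivAt_const _ _
    · have hpos : 0 < f i x0 := by
        rw [interior_P_eq f P hP hPne] at hx0int
        exact hx0int i hlin
      have hf : HasFDerivAt (f i) ((f i).linear.toContinuousLinearMap : V →L[ℝ] ℝ) x0 := by
        have hdec : (⇑(f i) : V → ℝ) = fun x => (f i).linear x + f i 0 := by
          funext x
          have hcf := congrFun (f i).decomp x
          simpa using hcf
        rw [hdec]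
        exact ((f i).linear.toContinuousLinearMap.hasFDerivAt).add_const (f i 0)
      have hφ : HasDerivAt phiR (Real.log (f i x0)) (f i x0) := by
        have h1 := Real.hasDerivAt_mul_log (ne_of_gt hpos)
        have h2 := (h1.sub (hasDerivAt_id (f i x0)))
        have h3 : HasDerivAt phiR (Real.log (f i x0) + 1 - 1) (f i x0) := h2
        rwa [add_sub_cancel_right] at h3
      exact hφ.comp_hasFDerivAt x0 hf
  have hloc : IsLocalMin h x0 := hmin.isLocalMin (mem_interior_iff_mem_nhds.1 hx0int)
  have := hloc.hasFDerivAt_eq_zero hderiv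
  rwa [sub_eq_zero] at this
end Aux6

section Aux7
variable {V : Type*} [NormedAddCommGroup V] [NormedSpace ℝ V] [FiniteDimensional ℝ V]
variable {m : ℕ}

lemma smooth_lemma (f : Fin m → (V →ᵃ[ℝ] ℝ)) (P : Set V) (hP : P = {x | ∀ i, 0 ≤ f i x})
    (hpos : ∀ x ∈ interior P, ∀ i, (f i).linear ≠ 0 → 0 < f i x) :
    ContDiffOn ℝ (⊤ : ℕ∞) (fun x => ∑ i, Real.log (f i x) • (f i).linear.toContinuousLinearMap)
      (interior P) := by
  apply ContDiffOn.sum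
  intro i _
  by_cases hlin : (f i).linear = 0
  · have hz : (fun x : V => Real.log (f i x) • (f i).linear.toContinuousLinearMap)
        = fun _ => (0 : V →L[ℝ] ℝ) := by
      funext x
      rw [hlin]
      simp
    rw [hz]
    exact contDiffOn_const
  · apply ContDiffOn.fun_smul _ contDiffOn_const
    intro x hx
    apply ContDiffAt.contDiffWithinAt
    have hfa : ContDiffAt ℝ (⊤ : ℕ∞) (f i) x := by
      have hdec : (⇑(f i) : V → ℝ) = fun x => (f i).linear x + f i 0 := by
        funext x
        have hcf := congrFun (f i).decomp x
        simpa using hcf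
      rw [hdec]
      exact ((f i).linear.toContinuousLinearMap.contDiff.add contDiff_const).contDiffAt
    exact (Real.contDiffAt_log.2 (ne_of_gt (hpos x hx i hlin))).comp x hfa
end Aux7

/-- Main theorem: the Hilbert metric on the interior of a compact convex polytope
`P = {x ∈ V : fᵢ(x) ≥ 0}` in an `n`-dimensional vector space is bilipschitz to the normed
dual space via the map `Φ(x) = Σᵢ log(fᵢ(x)) dfᵢ`, which is a bilipschitz diffeomorphism
onto `V*`. -/
theorem hilbert_metric_polytope_bilipschitz {V : Type*}
    [NormedAddCommGroup V] [NormedSpace ℝ V] [FiniteDimensional ℝ V]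
    {m : ℕ} (f : Fin m → (V →ᵃ[ℝ] ℝ))
    (P : Set V) (hP : P = {x | ∀ i, 0 ≤ f i x})
    (hPcomp : IsCompact P) (hPint : (interior P).Nonempty)
    (d : V → V → ℝ)
    (hd0 : ∀ x, d x x = 0)
    (hd : ∀ x y, x ∈ interior P → y ∈ interior P → x ≠ y →
      ∀ a1 a2 : V, a1 ∈ frontier P → a2 ∈ frontier P →
      (∃ t1 t2 : ℝ, t1 < 0 ∧ 1 < t2 ∧ a1 = x + t1 • (y - x) ∧ a2 = x + t2 • (y - x)) →
      d x y = (1/2) * |Real.log ((‖y - a1‖ / ‖x - a1‖) * (‖x - a2‖ / ‖y - a2‖))|)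
    (Φ : V → (V →L[ℝ] ℝ))
    (hΦ : ∀ x, Φ x = ∑ i, Real.log (f i x) • ((f i).linear.toContinuousLinearMap)) :
    Set.BijOn Φ (interior P) Set.univ ∧
      ContDiffOn ℝ (⊤ : ℕ∞) Φ (interior P) ∧
      ∃ C1 > 0, ∃ C2 > 0, ∀ x ∈ interior P, ∀ y ∈ interior P,
        C1 * d x y ≤ ‖Φ x - Φ y‖ ∧ ‖Φ x - Φ y‖ ≤ C2 * d x y := by
  classical
  rcases subsingleton_or_nontrivial V with hV | hV
  · -- trivial case: V is a single point
    obtain ⟨x0, hx0⟩ := hPint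
    have hΦc : ∀ x : V, Φ x = Φ x0 := fun x => congrArg Φ (Subsingleton.elim x x0)
    refine ⟨⟨fun x _ => mem_univ _, fun a _ b _ _ => Subsingleton.elim a b, ?_⟩,
      ?_, 1, one_pos, 1, one_pos, ?_⟩
    · intro ℓ _
      refine ⟨x0, hx0, ?_⟩
      ext v
      rw [Subsingleton.elim v (0 : V)]
      simp
    · exact contDiffOn_const.congr fun x _ => hΦc x
    · intro x _ y _
      have hxy : x = y := Subsingleton.elim x y
      subst hxy
      rw [hd0 x]
      simp
  · -- nontrivial case
    have hPne : P.Nonempty := hPint.mono interior_subset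
    have hm : Nonempty (Fin m) := by
      rcases Nat.eq_zero_or_pos m with h0 | hposm
      · exfalso
        subst h0
        have huniv : P = univ := by
          rw [hP]; ext x; simp
        rw [huniv] at hPcomp
        obtain ⟨R, hR⟩ := hPcomp.isBounded.exists_norm_le
        obtain ⟨v, hv⟩ := exists_ne (0 : V)
        have hvn : 0 < ‖v‖ := norm_pos_iff.2 hv
        have hR0 : 0 ≤ R := le_trans (norm_nonneg v) (hR v (mem_univ _))
        have := hR (((R + 1)/‖v‖) • v) (mem_univ _)
        rw [norm_smul, Real.norm_eq_abs, abs_of_pos (by positivity),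
          div_mul_cancel₀ _ (ne_of_gt hvn)] at this
        linarith
      · exact ⟨⟨0, hposm⟩⟩
    have hQint := interior_P_eq f P hP hPne
    have hpos : ∀ x ∈ interior P, ∀ i, (f i).linear ≠ 0 → 0 < f i x := by
      intro x hx i h
      rw [hQint] at hx
      exact hx i h
    obtain ⟨ε, hε, heps⟩ := eps_lower f hm
    have hdiff : ∀ x y : V, Φ x - Φ y
        = ∑ j, (Real.log (f j x) - Real.log (f j y)) • (f j).linear.toContinuousLinearMap := by
      intro x y
      rw [hΦ x, hΦ y, ← Finset.sum_sub_distrib]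
      exact Finset.sum_congr rfl fun j _ => (sub_smul _ _ _).symm
    have hlow : ∀ x ∈ interior P, ∀ y ∈ interior P, ∀ i : Fin m,
        ε * |Real.log (f i x) - Real.log (f i y)| ≤ ‖Φ x - Φ y‖ := by
      intro x hx y hy i
      rw [hdiff x y]
      exact heps x y (fun i h => hpos x hx i h) (fun i h => hpos y hy i h) i
    refine ⟨⟨fun x _ => mem_univ _, ?_, ?_⟩, ?_, ?_⟩
    · -- injectivity
      intro x hx y hy hxyΦ
      by_contra hne
      have hvals : ∀ i, f i x = f i y := by
        intro i
        by_cases hlin : (f i).linear = 0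
        · have h1 : f i x - f i y = 0 := by rw [affine_apply_sub, hlin]; simp
          linarith
        · have h1 := hlow x hx y hy i
          rw [hxyΦ, sub_self, norm_zero] at h1
          have h2 : |Real.log (f i x) - Real.log (f i y)| = 0 := by
            nlinarith [abs_nonneg (Real.log (f i x) - Real.log (f i y))]
          have h3 : Real.log (f i x) = Real.log (f i y) := by
            have := abs_eq_zero.1 h2; linarith
          exact Real.log_injOn_pos (mem_Ioi.2 (hpos x hx i hlin))
            (mem_Ioi.2 (hpos y hy i hlin)) h3
      obtain ⟨R, hR⟩ := hPcomp.isBounded.exists_norm_le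
      have hvne : y - x ≠ 0 := sub_ne_zero.2 (Ne.symm hne)
      have hvn : 0 < ‖y - x‖ := norm_pos_iff.2 hvne
      have hRx : ‖x‖ ≤ R := hR x (interior_subset hx)
      set t : ℝ := (R + ‖x‖ + 1)/‖y - x‖ with htd
      have htpos : 0 < t := div_pos (by linarith [norm_nonneg x]) hvn
      have hmem : x + t • (y - x) ∈ P := by
        rw [hP]
        intro i
        rw [line_eval f i x y t, hvals i, sub_self, mul_zero, add_zero]
        have hyP := interior_subset hy
        rw [hP] at hyP
        exact hyP i
      have hnorm := hR _ hmem
      have h5 : ‖t • (y - x)‖ = R + ‖x‖ + 1 := by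
        rw [norm_smul, Real.norm_eq_abs, abs_of_pos htpos, htd,
          div_mul_cancel₀ _ (ne_of_gt hvn)]
      have h6 : ‖t • (y - x)‖ ≤ ‖x + t • (y - x)‖ + ‖x‖ := by
        have he : ‖t • (y - x)‖ = ‖(x + t • (y - x)) - x‖ := by congr 1; abel
        rw [he]
        exact norm_sub_le _ _
      rw [h5] at h6
      linarith
    · -- surjectivity
      intro ℓ _
      obtain ⟨x0, hx0, hx0eq⟩ := surj_lemma f P hP hPcomp hPint ℓ
      exact ⟨x0, hx0, by rw [hΦ x0]; exact hx0eq⟩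
    · -- smoothness
      have hfun : Φ = fun x => ∑ i, Real.log (f i x) • (f i).linear.toContinuousLinearMap :=
        funext hΦ
      rw [hfun]
      exact smooth_lemma f P hP hpos
    · -- bilipschitz bounds
      refine ⟨ε, hε, 1 + 2 * ∑ i, ‖(f i).linear.toContinuousLinearMap‖, by positivity, ?_⟩
      intro x hx y hy
      by_cases hxy : x = y
      · subst hxy
        rw [hd0 x]
        simp
      constructor
      · obtain ⟨i, hlin, hdle⟩ := d_le_log f P hP hPcomp d hd hPint hx hy hxy
        have h1 := hlow x hx y hy i
        calc ε * d x y ≤ ε * |Real.log (f i x) - Real.log (f i y)| := by nlinarith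
          _ ≤ ‖Φ x - Φ y‖ := h1
      · have hdnn := (d_nonneg f P hP hPcomp d hd hx hy hxy).1
        rw [hdiff x y]
        calc ‖∑ j, (Real.log (f j x) - Real.log (f j y)) • (f j).linear.toContinuousLinearMap‖
            ≤ ∑ j, ‖(Real.log (f j x) - Real.log (f j y)) • (f j).linear.toContinuousLinearMap‖ :=
              norm_sum_le _ _
          _ ≤ ∑ j, (2 * d x y) * ‖(f j).linear.toContinuousLinearMap‖ := by
              apply Finset.sum_le_sum
              intro j _
              rw [norm_smul, Real.norm_eq_abs]
              exact mul_le_mul_of_nonneg_right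
                (log_ratio_le f P hP hPcomp d hd hPint hx hy hxy j) (norm_nonneg _)
          _ = (2 * ∑ j, ‖(f j).linear.toContinuousLinearMap‖) * d x y := by
              rw [← Finset.mul_sum]; ring
          _ ≤ (1 + 2 * ∑ j, ‖(f j).linear.toContinuousLinearMap‖) * d x y := by nlinarith
end
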